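/- arXiv:1612.09145 — 10 statements merged into one kernel-verified Lean document; each statement's English description precedes it below -/
import Mathlib

section
/- Let G be a finite non-bipartite symmetric directed multigraph, let φ be a circulation on G, let η ≥ 1 be an integer, let λ be an η-labeling of φ, and let A_λ ⊆ ZMod η be its intersection set. Then for every ξ ∈ ZMod η whose canonical representative satisfies 1 ≤ ξ.val and 6·ξ.val ≤ η, there exists x ∈ A_λ such that η ≤ 3·(ξ·x).val and 3·(ξ·x).val ≤ 2·η (i.e., the representative of ξ·x lies in the interval [η/3, 2η/3]). -/
/-!
Suppose no `x ∈ A` puts `ξ * x` in the middle third. Then every `ξ * x` with `x ∈ A` has a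
signed representative of absolute value `< η/3`, and three such representatives are too short
to wrap around `ZMod η`, so along short steps the representatives behave like integers.
For `ψ := φ ∘ rev`, which fixes `pred`, the step `ξ * (lam (ψ e) - lam e)` is short; its
integer lift `α e` telescopes to `0` around each `pred`-fiber, so `∑ α = 0`. On the other hand
`lam (ψ e) - lam e + lam (ψ (rev e)) - lam (rev e) = 2`, and since `6 * ξ.val ≤ η` this lifts to
`α e + α (rev e) = 2 * ξ.val`. Hence `2 * ξ.val * |E| = 0`, so `E` is empty, and then any
colouring is proper.
-/

open Finset

lemma Int.eq_of_intCast_zmod_eq_of_abs_sub_lt {n : ℕ} {a b : ℤ} (h : (a : ZMod n) = b)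
    (hab : |a - b| < n) : a = b := by
  refine sub_eq_zero.1 (Int.eq_zero_of_abs_lt_dvd ?_ hab)
  rw [← dvd_neg, neg_sub]
  exact (ZMod.intCast_eq_intCast_iff_dvd_sub a b n).1 h

lemma Equiv.Perm.card_mul_eq_two_mul_sum_of_add_comp_eq {ι R : Type*} [Fintype ι]
    [CommSemiring R] (σ : Equiv.Perm ι) {f : ι → R} {c : R} (h : ∀ i, f i + f (σ i) = c) :
    Fintype.card ι * c = 2 * ∑ i, f i := by
  calc (Fintype.card ι : R) * c = ∑ i, (f i + f (σ i)) := by simp [h]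
    _ = 2 * ∑ i, f i := by rw [sum_add_distrib, Equiv.sum_comp σ f, two_mul]

namespace ZMod

variable {n : ℕ}

lemma three_mul_abs_valMinAbs_lt [NeZero n] (x : ZMod n)
    (hx : ¬(n ≤ 3 * x.val ∧ 3 * x.val ≤ 2 * n)) : 3 * |x.valMinAbs| < n := by
  rw [Int.abs_eq_natAbs, valMinAbs_natAbs_eq_min]
  have := x.val_lt
  omega

lemma valMinAbs_sub_of_three_mul_abs_lt {a b : ZMod n} (ha : 3 * |a.valMinAbs| < n)
    (hb : 3 * |b.valMinAbs| < n) (hab : 3 * |(a - b).valMinAbs| < n) :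
    (a - b).valMinAbs = a.valMinAbs - b.valMinAbs := by
  refine Int.eq_of_intCast_zmod_eq_of_abs_sub_lt (n := n)
    (by simp only [Int.cast_sub, coe_valMinAbs]) ?_
  have := abs_sub (a - b).valMinAbs (a.valMinAbs - b.valMinAbs)
  have := abs_sub a.valMinAbs b.valMinAbs
  linarith

lemma valMinAbs_add_eq_of_three_mul_abs_lt {a b : ZMod n} {c : ℤ} (ha : 3 * |a.valMinAbs| < n)
    (hb : 3 * |b.valMinAbs| < n) (hc : 3 * |c| ≤ n) (habc : a + b = c) :
    a.valMinAbs + b.valMinAbs = c := by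
  refine Int.eq_of_intCast_zmod_eq_of_abs_sub_lt (n := n)
    (by rw [Int.cast_add, coe_valMinAbs, coe_valMinAbs, habc]) ?_
  have := abs_sub (a.valMinAbs + b.valMinAbs) c
  have := abs_add_le a.valMinAbs b.valMinAbs
  linarith

lemma sum_valMinAbs_sub_comp_eq_zero {ι : Type*} (s : Finset ι) (σ : Equiv.Perm ι)
    (hσ : ∀ i, i ∈ s ↔ σ i ∈ s) (y : ι → ZMod n)
    (hy : ∀ i ∈ s, ∀ j ∈ s, 3 * |(y i - y j).valMinAbs| < n) :
    ∑ i ∈ s, (y (σ i) - y i).valMinAbs = 0 := by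
  rcases s.eq_empty_or_nonempty with rfl | ⟨i₀, hi₀⟩
  · rfl
  set X : ι → ℤ := fun i ↦ (y i - y i₀).valMinAbs
  have hstep : ∀ i ∈ s, (y (σ i) - y i).valMinAbs = X (σ i) - X i := fun i hi ↦ by
    rw [← valMinAbs_sub_of_three_mul_abs_lt (hy _ ((hσ i).1 hi) _ hi₀) (hy _ hi _ hi₀)]
    · rw [sub_sub_sub_cancel_right]
    · rw [sub_sub_sub_cancel_right]
      exact hy _ ((hσ i).1 hi) _ hi
  rw [sum_congr rfl hstep, sum_sub_distrib, sum_equiv σ hσ (fun _ _ ↦ rfl), sub_self]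

lemma sum_valMinAbs_sub_comp_eq_zero_of_fiberwise {ι κ : Type*} [Fintype ι] (key : ι → κ)
    (σ : Equiv.Perm ι) (hσ : ∀ i, key (σ i) = key i) (y : ι → ZMod n)
    (hy : ∀ i j, key i = key j → 3 * |(y i - y j).valMinAbs| < n) :
    ∑ i, (y (σ i) - y i).valMinAbs = 0 := by
  classical
  rw [← sum_fiberwise_of_maps_to (fun i _ ↦ mem_image_of_mem key (mem_univ i))]
  refine sum_eq_zero fun k _ ↦ sum_valMinAbs_sub_comp_eq_zero _ σ (fun i ↦ ?_) y ?_
  · simp only [mem_filter, mem_univ, true_and, hσ]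
  · simp only [mem_filter, mem_univ, true_and]
    rintro i rfl j hj
    exact hy i j hj.symm

end ZMod

theorem stmt_0_general {V E : Type} [Fintype E]
    (pred succ : E → V) (rev : E → E)
    (hrev : ∀ e, rev (rev e) = e)
    (hsuccrev : ∀ e, succ (rev e) = pred e)
    (hnonbip : ¬ ∃ c : V → Bool, ∀ e, c (pred e) ≠ c (succ e))
    (φ : Equiv.Perm E) (hφ : ∀ e, succ e = pred (φ e))
    (η : ℕ)
    (lam : E → ZMod η) (hlam : ∀ e, lam (φ e) = lam e + 1)
    (A : Set (ZMod η))
    (hA : A = {z : ZMod η | ∃ e₁ e₂, pred e₁ = pred e₂ ∧ z = lam e₁ - lam e₂}) :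
    ∀ ξ : ZMod η, 1 ≤ ξ.val → 6 * ξ.val ≤ η →
      ∃ x ∈ A, η ≤ 3 * (ξ * x).val ∧ 3 * (ξ * x).val ≤ 2 * η := by
  intro ξ hξ1 hξ6
  by_contra! hmid
  have : NeZero η := ⟨by omega⟩
  let r : Equiv.Perm E := Function.Involutive.toPerm rev hrev
  let ψ : Equiv.Perm E := r.trans φ
  have hψ : ∀ e, ψ e = φ (rev e) := fun _ ↦ rfl
  have hpredψ : ∀ e, pred (ψ e) = pred e := fun e ↦ by rw [hψ, ← hφ, hsuccrev]
  have hshort : ∀ e₁ e₂, pred e₁ = pred e₂ → 3 * |(ξ * lam e₁ - ξ * lam e₂).valMinAbs| < η := by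
    intro e₁ e₂ h
    rw [← mul_sub]
    refine ZMod.three_mul_abs_valMinAbs_lt _ fun hx ↦ ?_
    have := hmid _ (by rw [hA]; exact ⟨e₁, e₂, h, rfl⟩) hx.1
    omega
  set α : E → ℤ := fun e ↦ (ξ * lam (ψ e) - ξ * lam e).valMinAbs
  have hsum : ∑ e, α e = 0 :=
    ZMod.sum_valMinAbs_sub_comp_eq_zero_of_fiberwise pred ψ hpredψ (ξ * lam ·) hshort
  have hξ : 3 * |(2 * ξ.val : ℤ)| ≤ η := by
    rw [abs_of_nonneg (by positivity)]
    exact_mod_cast (by omega : 3 * (2 * ξ.val) ≤ η)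
  have hpair : ∀ e, α e + α (rev e) = 2 * ξ.val := fun e ↦
    ZMod.valMinAbs_add_eq_of_three_mul_abs_lt (hshort _ _ (hpredψ e))
      (hshort _ _ (hpredψ (rev e))) hξ (by
        simp only [hψ, hrev, hlam]
        push_cast [ZMod.natCast_zmod_val]
        ring)
  have hcard : (Fintype.card E : ℤ) * (2 * ξ.val) = 0 := by
    rw [r.card_mul_eq_two_mul_sum_of_add_comp_eq hpair, hsum, mul_zero]
  have : IsEmpty E := Fintype.card_eq_zero_iff.1 (by have := mul_eq_zero.1 hcard; omega)
  exact hnonbip ⟨fun _ ↦ true, fun e ↦ isEmptyElim e⟩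

/-- For a circulation on a finite non-bipartite symmetric directed
multigraph, with an `η`-labeling `lam` and intersection set `A`, every `ξ` with
`1 ≤ ξ.val` and `6 * ξ.val ≤ η` admits some `x ∈ A` with `ξ * x` represented
in `[η/3, 2η/3]`. -/
theorem stmt_0 {V E : Type} [Fintype V] [Fintype E] [Nonempty V]
    (pred succ : E → V) (rev : E → E)
    (hrev : ∀ e, rev (rev e) = e)
    (hpredrev : ∀ e, pred (rev e) = succ e)
    (hsuccrev : ∀ e, succ (rev e) = pred e)
    (hrevloop : ∀ e, pred e = succ e → rev e = e)
    (hnonbip : ¬ ∃ c : V → Bool, ∀ e, c (pred e) ≠ c (succ e))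
    (φ : Equiv.Perm E) (hφ : ∀ e, succ e = pred (φ e))
    (η : ℕ) (hη : 1 ≤ η)
    (lam : E → ZMod η) (hlam : ∀ e, lam (φ e) = lam e + 1)
    (A : Set (ZMod η))
    (hA : A = {z : ZMod η | ∃ e₁ e₂, pred e₁ = pred e₂ ∧ z = lam e₁ - lam e₂}) :
    ∀ ξ : ZMod η, 1 ≤ ξ.val → 6 * ξ.val ≤ η →
      ∃ x ∈ A, η ≤ 3 * (ξ * x).val ∧ 3 * (ξ * x).val ≤ 2 * η :=
  stmt_0_general pred succ rev hrev hsuccrev hnonbip φ hφ η lam hlam A hA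
end

section
/- Let G be a finite non-bipartite symmetric directed multigraph, let φ be a circulation on G, let η ≥ 1 be an integer, let λ be an η-labeling of φ, and let A_λ ⊆ ZMod η be its intersection set. Then Bohr(A_λ + A_λ, 1/6) = {0}; that is, the only ξ ∈ ZMod η satisfying ‖s·ξ‖ ≤ 1/6 for all s ∈ A_λ + A_λ is ξ = 0. -/
/-!
Suppose `ξ ≠ 0` lies in the Bohr set. As `0 ∈ A`, both `a ξ` and `2 a ξ` are within `1/6` of
`0` for `a ∈ A`, so `a ξ` is within `1/12`. Fix an arc `b v` leaving each vertex `v` and put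
`χ v = λ (b v) ξ`; then `λ e ξ` is within `1/12` of `χ (pred e)` and grows by `ξ` along `φ`.
Lift these deviations to integers `X e`. The symmetrised errors
`(X e - X (φ e)) + (X (rev e) - X (φ (rev e)))` all lift `-2 ξ`, have absolute value at most
`η / 3`, and sum to zero since `φ` and `rev` are permutations; hence they vanish and `2 ξ = 0`.
Then `a ξ = 0` for every `a ∈ A`, so `χ (succ e) = χ (pred e) + ξ` with `χ` valued in `{0, ξ}`,
a proper 2-colouring.
-/

open Pointwise

/-- The "fractional part" norm on `ZMod η`: `min(x.val, η − x.val) / η`. -/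
noncomputable def zmodNorm {η : ℕ} (x : ZMod η) : ℝ :=
  (↑(min x.val (η - x.val)) : ℝ) / (η : ℝ)

namespace ZMod

variable {η : ℕ}

theorem eq_of_intCast_eq_of_abs_sub_lt {k l : ℤ} (h : (k : ZMod η) = l) (hlt : |k - l| < η) :
    k = l := by
  rw [intCast_eq_intCast_iff_dvd_sub] at h
  rw [abs_sub_comm] at hlt
  exact (sub_eq_zero.mp (Int.eq_zero_of_abs_lt_dvd h hlt)).symm

theorem eq_zero_of_add_self_eq_zero {x : ZMod η} (hx : x + x = 0)
    (hsmall : 2 * |x.valMinAbs| < η) : x = 0 := by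
  have h : ((2 * x.valMinAbs : ℤ) : ZMod η) = ((0 : ℤ) : ZMod η) := by
    push_cast; rw [two_mul, hx]
  have := eq_of_intCast_eq_of_abs_sub_lt h (by rwa [sub_zero, abs_mul, abs_two])
  rw [← valMinAbs_eq_zero]
  omega

theorem eq_zero_of_sum_eq_zero_of_intCast_eq {ι : Type*} [Fintype ι] [Nonempty ι]
    {s : ι → ℤ} {z : ZMod η} (hsum : ∑ i, s i = 0) (hcast : ∀ i, (s i : ZMod η) = z)
    (hsmall : ∀ i, 2 * |s i| < η) : z = 0 := by
  obtain ⟨i₀⟩ := ‹Nonempty ι›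
  have hconst : ∀ i, s i = s i₀ := fun i =>
    eq_of_intCast_eq_of_abs_sub_lt (by rw [hcast, hcast])
      (by have := abs_sub (s i) (s i₀); linarith [hsmall i, hsmall i₀])
  rw [Finset.sum_congr rfl fun i _ => hconst i, Finset.sum_const, Finset.card_univ,
    nsmul_eq_mul, mul_eq_zero] at hsum
  rw [← hcast i₀, hsum.resolve_left (by exact_mod_cast Fintype.card_ne_zero), Int.cast_zero]

variable [NeZero η]

theorem zmodNorm_le_one_div_six_iff (x : ZMod η) :
    zmodNorm x ≤ 1 / 6 ↔ 6 * |x.valMinAbs| ≤ η := by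
  have hη : (0 : ℝ) < η := Nat.cast_pos.mpr (NeZero.pos η)
  rw [zmodNorm, ← valMinAbs_natAbs_eq_min, div_le_iff₀ hη, ← Int.natCast_natAbs]
  constructor <;> intro h
  · exact_mod_cast (by linarith : (6 * x.valMinAbs.natAbs : ℝ) ≤ η)
  · have h' : (6 * x.valMinAbs.natAbs : ℝ) ≤ η := by exact_mod_cast h
    linarith

/-- Doubling is exact on representatives of absolute value at most `η / 6`. -/
theorem twelve_mul_abs_valMinAbs_le (x : ZMod η) (hx : 6 * |x.valMinAbs| ≤ η)
    (hxx : 6 * |(x + x).valMinAbs| ≤ η) : 12 * |x.valMinAbs| ≤ η := by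
  have hpos : (0 : ℤ) < η := Nat.cast_pos.mpr (NeZero.pos η)
  have hdouble : (x + x).valMinAbs = 2 * x.valMinAbs := by
    rw [valMinAbs_spec]
    have := neg_abs_le x.valMinAbs
    have := le_abs_self x.valMinAbs
    refine ⟨by push_cast; ring, ?_, ?_⟩ <;> linarith
  rw [hdouble, abs_mul, abs_two] at hxx
  linarith

theorem twelve_mul_abs_valMinAbs_mul_le_of_zmodNorm_le {A : Set (ZMod η)} {a ξ : ZMod η}
    (h0 : 0 ∈ A) (hξ : ∀ s ∈ A + A, zmodNorm (s * ξ) ≤ 1 / 6) (ha : a ∈ A) :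
    12 * |(a * ξ).valMinAbs| ≤ η := by
  have h₁ := hξ _ (Set.add_mem_add ha h0)
  have h₂ := hξ _ (Set.add_mem_add ha ha)
  rw [add_zero, zmodNorm_le_one_div_six_iff] at h₁
  rw [add_mul, zmodNorm_le_one_div_six_iff] at h₂
  exact twelve_mul_abs_valMinAbs_le _ h₁ h₂

theorem mul_eq_zero_or_eq_self_of_add_self_eq_zero (x : ZMod η) {ξ : ZMod η}
    (hξ : ξ + ξ = 0) : x * ξ = 0 ∨ x * ξ = ξ := by
  rw [← natCast_zmod_val x]
  obtain ⟨k, hk | hk⟩ := Nat.even_or_odd' x.val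
  · left; rw [hk]; push_cast; rw [mul_comm 2, mul_assoc, two_mul, hξ, mul_zero]
  · right; rw [hk]; push_cast; rw [add_mul, mul_comm 2, mul_assoc, two_mul, hξ]; ring

end ZMod

section Circulation

variable {V E : Type*} {pred succ : E → V}

theorem exists_bool_coloring_of_two_valued {α : Type*} [DecidableEq α] (χ : V → α) {a b : α}
    (hχ : ∀ v, χ v = a ∨ χ v = b) (hadj : ∀ e, χ (pred e) ≠ χ (succ e)) :
    ∃ c : V → Bool, ∀ e, c (pred e) ≠ c (succ e) := by
  refine ⟨fun v => decide (χ v = a), fun e => ?_⟩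
  have := hadj e
  rcases hχ (pred e) with h | h <;> rcases hχ (succ e) with h' | h' <;> grind

variable [Fintype E] {rev : E → E} {φ : Equiv.Perm E} {η : ℕ} [NeZero η]

theorem add_self_eq_zero_of_abs_valMinAbs_le [Nonempty E] (hrev : Function.Involutive rev)
    (hpredrev : ∀ e, pred (rev e) = succ e) (hsuccrev : ∀ e, succ (rev e) = pred e)
    (hφ : ∀ e, succ e = pred (φ e)) {μ : E → ZMod η} {ξ : ZMod η}
    (hμ : ∀ e, μ (φ e) = μ e + ξ) (χ : V → ZMod η)
    (hsmall : ∀ e, 12 * |(μ e - χ (pred e)).valMinAbs| ≤ η) : ξ + ξ = 0 := by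
  set X : E → ℤ := fun e => (μ e - χ (pred e)).valMinAbs
  set c : E → ℤ := fun e => X e - X (φ e)
  have hc : ∀ e, (c e : ZMod η) = χ (succ e) - χ (pred e) - ξ := fun e => by
    simp only [c, X, Int.cast_sub, ZMod.coe_valMinAbs, hμ, hφ]
    ring
  have hcast : ∀ e, ((c e + c (rev e) : ℤ) : ZMod η) = -(ξ + ξ) := fun e => by
    rw [Int.cast_add, hc, hc, hpredrev, hsuccrev]
    ring
  have hsum : ∑ e, (c e + c (rev e)) = 0 := by
    have hrevsum : ∑ e, c (rev e) = ∑ e, c e := Equiv.sum_comp hrev.toPerm c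
    rw [Finset.sum_add_distrib, hrevsum, Finset.sum_sub_distrib,
      Equiv.sum_comp φ X, sub_self, add_zero]
  have hbound : ∀ e, 2 * |c e + c (rev e)| < η := fun e => by
    have hη : (0 : ℤ) < η := Nat.cast_pos.mpr (NeZero.pos η)
    have h₁ := abs_sub (X e) (X (φ e))
    have h₂ := abs_sub (X (rev e)) (X (φ (rev e)))
    have h₃ := abs_add_le (c e) (c (rev e))
    linarith [hsmall e, hsmall (φ e), hsmall (rev e), hsmall (φ (rev e))]
  exact neg_eq_zero.mp (ZMod.eq_zero_of_sum_eq_zero_of_intCast_eq hsum hcast hbound)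

end Circulation

theorem stmt_1_general {V E : Type} [Fintype E]
    (pred succ : E → V) (rev : E → E)
    (hrev : ∀ e, rev (rev e) = e)
    (hpredrev : ∀ e, pred (rev e) = succ e)
    (hsuccrev : ∀ e, succ (rev e) = pred e)
    (hnonbip : ¬ ∃ c : V → Bool, ∀ e, c (pred e) ≠ c (succ e))
    (φ : Equiv.Perm E) (hφ : ∀ e, succ e = pred (φ e))
    (η : ℕ) (hη : 1 ≤ η)
    (lam : E → ZMod η) (hlam : ∀ e, lam (φ e) = lam e + 1)
    (A : Set (ZMod η))
    (hA : A = {z : ZMod η | ∃ e₁ e₂, pred e₁ = pred e₂ ∧ z = lam e₁ - lam e₂}) :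
    {ξ : ZMod η | ∀ s ∈ A + A, zmodNorm (s * ξ) ≤ 1 / 6} = {0} := by
  have : NeZero η := ⟨by omega⟩
  ext ξ
  refine ⟨fun hξ => ?_, fun hξ s _ => by simp [Set.mem_singleton_iff.mp hξ, zmodNorm]⟩
  by_contra hξ0
  refine hnonbip ?_
  rcases isEmpty_or_nonempty E with hE | hE
  · exact ⟨fun _ => true, fun e => isEmptyElim e⟩
  have h0 : (0 : ZMod η) ∈ A := by rw [hA]; exact ⟨hE.some, hE.some, rfl, (sub_self _).symm⟩
  have hsmall := fun a (ha : a ∈ A) =>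
    ZMod.twelve_mul_abs_valMinAbs_mul_le_of_zmodNorm_le h0 hξ ha
  set b : V → E := Function.invFun pred
  have hdev : ∀ e, lam e - lam (b (pred e)) ∈ A := fun e => by
    rw [hA]; exact ⟨e, b (pred e), (Function.invFun_eq ⟨e, rfl⟩).symm, rfl⟩
  set χ : V → ZMod η := fun v => lam (b v) * ξ
  have h2ξ : ξ + ξ = 0 := by
    refine add_self_eq_zero_of_abs_valMinAbs_le (μ := fun e => lam e * ξ) hrev hpredrev
      hsuccrev hφ (fun e => by simp only [hlam, add_mul, one_mul]) χ fun e => ?_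
    simpa only [χ, ← sub_mul] using hsmall _ (hdev e)
  have hχ : ∀ e, lam e * ξ = χ (pred e) := fun e => by
    have h := ZMod.eq_zero_of_add_self_eq_zero (x := (lam e - lam (b (pred e))) * ξ)
      (by rw [← mul_add, h2ξ, mul_zero]) (by linarith [hsmall _ (hdev e)])
    rwa [sub_mul, sub_eq_zero] at h
  have hstep : ∀ e, χ (succ e) = χ (pred e) + ξ := fun e => by
    rw [hφ, ← hχ, ← hχ, hlam, add_one_mul]
  refine exists_bool_coloring_of_two_valued χ
    (fun v => ZMod.mul_eq_zero_or_eq_self_of_add_self_eq_zero _ h2ξ) fun e => ?_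
  rw [hstep]
  exact (add_ne_left.mpr hξ0).symm

/-- For a circulation on a finite non-bipartite symmetric directed
multigraph with an `η`-labeling `lam` and intersection set `A`, the Bohr set
`Bohr(A + A, 1/6)` is exactly `{0}`. -/
theorem stmt_1 {V E : Type} [Fintype V] [Fintype E] [Nonempty V]
    (pred succ : E → V) (rev : E → E)
    (hrev : ∀ e, rev (rev e) = e)
    (hpredrev : ∀ e, pred (rev e) = succ e)
    (hsuccrev : ∀ e, succ (rev e) = pred e)
    (hrevloop : ∀ e, pred e = succ e → rev e = e)
    (hnonbip : ¬ ∃ c : V → Bool, ∀ e, c (pred e) ≠ c (succ e))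
    (φ : Equiv.Perm E) (hφ : ∀ e, succ e = pred (φ e))
    (η : ℕ) (hη : 1 ≤ η)
    (lam : E → ZMod η) (hlam : ∀ e, lam (φ e) = lam e + 1)
    (A : Set (ZMod η))
    (hA : A = {z : ZMod η | ∃ e₁ e₂, pred e₁ = pred e₂ ∧ z = lam e₁ - lam e₂}) :
    {ξ : ZMod η | ∀ s ∈ A + A, zmodNorm (s * ξ) ≤ 1 / 6} = {0} :=
  stmt_1_general pred succ rev hrev hpredrev hsuccrev hnonbip φ hφ η hη lam hlam A hA
end

section
/- Let η ≥ 2 be an integer, let A be a nonempty finite subset of ZMod η, and let s ≥ 1 be a real number such that Spec_{1−1/s}(A) = {0}. Then for every natural number κ with κ ≥ s·ln η, the set κA − κA equals all of ZMod η; that is, every element of ZMod η is a sum of κ elements of A minus a sum of κ elements of A. -/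
/-!
Write `S ψ = ∑_{a ∈ A} ψ a` for a character `ψ` of a finite abelian group `G`. By orthogonality,
`∑_ψ |S ψ|^{2κ} ψ(-z)` counts, up to the factor `|G|`, the representations of `z` as a
difference of two sums of `κ` elements of `A`, so it vanishes if `z ∉ κA - κA`. The trivial
character contributes `|A|^{2κ}`, while a spectral gap `|S ψ| ≤ α |A|` for `ψ ≠ 0` bounds the
other terms by `(|G| - 1) α^{2κ} |A|^{2κ}`, which is smaller as soon as `(|G| - 1) α^{2κ} < 1`.
For `G = ZMod η` and `α = 1 - 1/s` this holds once `κ ≥ s log η`, since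
`(1 - 1/s)^κ ≤ exp (-κ/s) ≤ 1/η`.
-/

open Pointwise

/-- The `κ`-fold iterated sumset `κA` of a finite subset of `ZMod η`
(with `0A = {0}`). -/
def iterSumset {η : ℕ} (A : Finset (ZMod η)) : ℕ → Finset (ZMod η)
  | 0 => {0}
  | n + 1 => iterSumset A n + A

/-- The normalized Fourier coefficient `Â(j)` of a finite subset of `ZMod η`. -/
noncomputable def zmodFourier {η : ℕ} (A : Finset (ZMod η)) (j : ZMod η) : ℂ :=
  (A.card : ℂ)⁻¹ *
    ∑ a ∈ A, Complex.exp (2 * (Real.pi : ℂ) * Complex.I * ((a * j).val : ℂ) / (η : ℂ))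

open Finset ComplexConjugate

lemma AddChar.map_sum_eq_prod {ι A M : Type*} [AddCommMonoid A] [CommMonoid M]
    (ψ : AddChar A M) (s : Finset ι) (f : ι → A) :
    ψ (∑ i ∈ s, f i) = ∏ i ∈ s, ψ (f i) :=
  map_prod ψ.toMonoidHom (fun i ↦ Multiplicative.ofAdd (f i)) s

lemma AddChar.sum_pow_eq_sum_piFinset {G R : Type*} [AddCommMonoid G] [CommSemiring R]
    (ψ : AddChar G R) (A : Finset G) (κ : ℕ) :
    (∑ a ∈ A, ψ a) ^ κ = ∑ p ∈ Fintype.piFinset fun _ : Fin κ ↦ A, ψ (∑ i, p i) := by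
  simp only [sum_pow', ψ.map_sum_eq_prod]

lemma Finset.sum_ne_zero_of_norm_sum_erase_lt {ι E : Type*} [DecidableEq ι]
    [SeminormedAddCommGroup E] {s : Finset ι} {f : ι → E} {i : ι} (hi : i ∈ s)
    (h : ∑ j ∈ s.erase i, ‖f j‖ < ‖f i‖) : ∑ j ∈ s, f j ≠ 0 := by
  rw [← add_sum_erase s f hi]
  intro hzero
  have := norm_sum_le (s.erase i) f
  rw [eq_neg_of_add_eq_zero_left hzero, norm_neg] at h
  linarith

section Sumset
variable {G : Type*} [AddCommGroup G] [DecidableEq G]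

lemma Finset.sum_mem_nsmul {A : Finset G} :
    ∀ {κ : ℕ} {a : Fin κ → G}, (∀ i, a i ∈ A) → ∑ i, a i ∈ κ • A
  | 0, _, _ => by simp
  | κ + 1, a, ha => by
    rw [Fin.sum_univ_castSucc, succ_nsmul]
    exact add_mem_add (sum_mem_nsmul fun i ↦ ha _) (ha _)

variable [Fintype G]

/-- The sum is `card G` times the number of ways to write `z = (a₁ + ⋯ + a_κ) - (b₁ + ⋯ + b_κ)`
with all `aᵢ, bᵢ ∈ A`. -/
lemma sum_charSum_pow_mul_conj_eq_zero {A : Finset G} {κ : ℕ} {z : G}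
    (hz : z ∉ κ • A - κ • A) :
    ∑ ψ : AddChar G ℂ, (∑ a ∈ A, ψ a) ^ κ * conj ((∑ a ∈ A, ψ a) ^ κ) * ψ (-z) = 0 := by
  set P := Fintype.piFinset fun _ : Fin κ ↦ A
  have hexpand : ∀ ψ : AddChar G ℂ,
      (∑ a ∈ A, ψ a) ^ κ * conj ((∑ a ∈ A, ψ a) ^ κ) * ψ (-z)
        = ∑ p ∈ P, ∑ q ∈ P, ψ (∑ i, p i - ∑ i, q i - z) := by
    intro ψ
    rw [ψ.sum_pow_eq_sum_piFinset, map_sum, sum_mul_sum, sum_mul]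
    refine sum_congr rfl fun p _ ↦ ?_
    rw [sum_mul]
    refine sum_congr rfl fun q _ ↦ ?_
    rw [← ψ.map_neg_eq_conj, ← ψ.map_add_eq_mul, ← ψ.map_add_eq_mul, sub_eq_add_neg,
      sub_eq_add_neg]
  rw [Fintype.sum_congr _ _ hexpand, sum_comm]
  refine sum_eq_zero fun p hp ↦ ?_
  rw [sum_comm]
  refine sum_eq_zero fun q hq ↦ AddChar.sum_apply_eq_zero_iff_ne_zero.mpr ?_
  rw [sub_ne_zero]
  rintro rfl
  exact hz (sub_mem_sub (sum_mem_nsmul fun i ↦ Fintype.mem_piFinset.mp hp i)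
    (sum_mem_nsmul fun i ↦ Fintype.mem_piFinset.mp hq i))

end Sumset

section Gap
variable {G : Type*} [AddCommGroup G] [DecidableEq G] [Fintype G]

theorem nsmul_sub_nsmul_eq_univ_of_norm_sum_le {A : Finset G} (hA : A.Nonempty) {α : ℝ} {κ : ℕ}
    (hψ : ∀ ψ : AddChar G ℂ, ψ ≠ 0 → ‖∑ a ∈ A, ψ a‖ ≤ α * #A)
    (hα : ((Fintype.card G : ℝ) - 1) * α ^ (2 * κ) < 1) :
    κ • A - κ • A = univ := by
  refine eq_univ_of_forall fun z ↦ by_contra fun hz ↦ ?_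
  set F : AddChar G ℂ → ℂ := fun ψ ↦ (∑ a ∈ A, ψ a) ^ κ * conj ((∑ a ∈ A, ψ a) ^ κ) * ψ (-z)
  have hnorm (ψ : AddChar G ℂ) : ‖F ψ‖ = ‖∑ a ∈ A, ψ a‖ ^ (2 * κ) := by
    simp only [F, norm_mul, Complex.norm_conj, AddChar.norm_apply, mul_one, ← sq, norm_pow, pow_mul']
  have hF0 : ‖F 0‖ = (#A : ℝ) ^ (2 * κ) := by simp [hnorm]
  have hcard : 0 < (#A : ℝ) ^ (2 * κ) := by have := hA.card_pos; positivity
  refine sum_ne_zero_of_norm_sum_erase_lt (mem_univ 0) ?_ (sum_charSum_pow_mul_conj_eq_zero hz)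
  calc ∑ ψ ∈ univ.erase 0, ‖F ψ‖
      ≤ ∑ ψ ∈ univ.erase (0 : AddChar G ℂ), (α * #A) ^ (2 * κ) := by
        refine sum_le_sum fun ψ hψ₀ ↦ ?_
        rw [hnorm]
        exact pow_le_pow_left₀ (norm_nonneg _) (hψ ψ (ne_of_mem_erase hψ₀)) _
    _ = ((Fintype.card G : ℝ) - 1) * α ^ (2 * κ) * (#A : ℝ) ^ (2 * κ) := by
        rw [sum_const, card_erase_of_mem (mem_univ _), card_univ, AddChar.card_eq, nsmul_eq_mul,
          Nat.cast_pred Fintype.card_pos, mul_pow, mul_assoc]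
    _ < ‖F 0‖ := by rw [hF0]; exact mul_lt_of_lt_one_left hcard hα

end Gap

open Real in
lemma one_sub_one_div_pow_le_inv {s x : ℝ} (hs : 1 ≤ s) (hx : 0 < x) {κ : ℕ}
    (hκ : s * log x ≤ κ) : (1 - 1 / s) ^ κ ≤ x⁻¹ := by
  have hs₀ : 0 < s := by linarith
  calc (1 - 1 / s) ^ κ ≤ exp (-(1 / s)) ^ κ := by
        refine pow_le_pow_left₀ (sub_nonneg.2 ((div_le_one hs₀).2 hs)) ?_ κ
        linarith [add_one_le_exp (-(1 / s))]
    _ = exp (-(κ / s)) := by rw [← exp_nat_mul]; ring_nf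
    _ ≤ exp (-log x) := by
        gcongr
        rwa [le_div_iff₀ hs₀, mul_comm]
    _ = x⁻¹ := by rw [exp_neg, exp_log hx]

lemma sub_one_mul_one_sub_one_div_pow_lt_one {s x : ℝ} (hs : 1 ≤ s) (hx : 1 ≤ x) {κ : ℕ}
    (hκ : s * Real.log x ≤ κ) : (x - 1) * (1 - 1 / s) ^ (2 * κ) < 1 := by
  have hx₀ : 0 < x := by linarith
  have h₀ : 0 ≤ 1 - 1 / s := sub_nonneg.2 (div_le_one_of_le₀ hs (by linarith))
  have h₁ : 1 - 1 / s ≤ 1 := by linarith [show 0 ≤ 1 / s by positivity]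
  calc (x - 1) * (1 - 1 / s) ^ (2 * κ) ≤ (x - 1) * x⁻¹ := by
        refine mul_le_mul_of_nonneg_left ?_ (by linarith)
        exact (pow_le_pow_of_le_one h₀ h₁ (by omega)).trans (one_sub_one_div_pow_le_inv hs hx₀ hκ)
    _ < 1 := by rw [sub_mul, mul_inv_cancel₀ hx₀.ne']; linarith [inv_pos.2 hx₀]

lemma iterSumset_eq_nsmul {η : ℕ} (A : Finset (ZMod η)) : ∀ κ, iterSumset A κ = κ • A
  | 0 => by rw [iterSumset, zero_nsmul]; rfl
  | κ + 1 => by rw [iterSumset, succ_nsmul, iterSumset_eq_nsmul]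

section ZMod
variable {η : ℕ} [NeZero η]

lemma zmodFourier_eq (A : Finset (ZMod η)) (j : ZMod η) :
    zmodFourier A j = (#A : ℂ)⁻¹ * ∑ a ∈ A, AddChar.zmodAddEquiv j a := by
  refine congrArg _ (sum_congr rfl fun a _ ↦ ?_)
  rw [← ZMod.toCircle_apply, mul_comm]
  -- `zmodAddEquiv j a` unfolds to the coercion of `ZMod.toCircle (j * a)`
  rfl

lemma norm_sum_le_of_zmodFourier_le {A : Finset (ZMod η)} (hA : A.Nonempty) {β : ℝ}
    (hβ : ∀ j ≠ 0, ‖zmodFourier A j‖ ≤ β) (ψ : AddChar (ZMod η) ℂ) (hψ : ψ ≠ 0) :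
    ‖∑ a ∈ A, ψ a‖ ≤ β * #A := by
  obtain ⟨j, rfl⟩ := AddChar.zmodAddEquiv.surjective ψ
  have hj : j ≠ 0 := by rintro rfl; exact hψ (map_zero _)
  have := hβ j hj
  rwa [zmodFourier_eq, norm_mul, norm_inv, Complex.norm_natCast,
    inv_mul_le_iff₀ (by exact_mod_cast hA.card_pos), mul_comm] at this

end ZMod

/-- If `Spec_{1−1/s}(A) = {0}` then `κA − κA = ZMod η` for every
`κ ≥ s · ln η`. -/
theorem stmt_2 (η : ℕ) (hη : 2 ≤ η) (A : Finset (ZMod η)) (hA : A.Nonempty)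
    (s : ℝ) (hs : 1 ≤ s)
    (hspec : {j : ZMod η | ‖zmodFourier A j‖ > 1 - 1 / s} = {0}) :
    ∀ κ : ℕ, (κ : ℝ) ≥ s * Real.log η →
      ∀ z : ZMod η, z ∈ iterSumset A κ - iterSumset A κ := by
  intro κ hκ z
  have : NeZero η := ⟨by omega⟩
  have hgap (j : ZMod η) (hj : j ≠ 0) : ‖zmodFourier A j‖ ≤ 1 - 1 / s :=
    not_lt.1 fun h ↦ hj (by simpa using hspec.subset h)
  have hsmall : ((Fintype.card (ZMod η) : ℝ) - 1) * (1 - 1 / s) ^ (2 * κ) < 1 := by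
    rw [ZMod.card]
    exact sub_one_mul_one_sub_one_div_pow_lt_one hs (by exact_mod_cast (by omega : 1 ≤ η)) hκ
  rw [iterSumset_eq_nsmul,
    nsmul_sub_nsmul_eq_univ_of_norm_sum_le hA (norm_sum_le_of_zmodFourier_le hA hgap) hsmall]
  exact mem_univ z
end

section
/- Let η ≥ 1 be an integer, let A ⊆ B be finite subsets of ZMod η with 0 ∈ A (so both are nonempty), and let K ≥ 1 and 0 < ε < 1 be real numbers such that |B − A| ≤ K·|B|. Then A − A ⊆ Bohr(Spec_{1−ε}(B − A), √(8·ε·K)); that is, for every x, y ∈ A and every ξ ∈ ZMod η with |(B−A)^(ξ)| > 1−ε one has ‖(x−y)·ξ‖ ≤ √(8·ε·K). -/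
/-!
Write `e(t) = exp(2πit/η)`, `C = B - A`, and let `θ` be the phase of `S = ∑_{c ∈ C} e(cξ)`. Then
`∑_{c ∈ C} |θ - e(cξ)|² = 2(|C| - |S|) < 2ε|C| ≤ 2εK|B|`. Every translate `B - x` with
`x ∈ A` lies in `C`, so by Cauchy–Schwarz `e((b - x)ξ)` is within `√(2εK)` of `θ` on average
over `b ∈ B`; comparing the translates by `x` and by `y` gives `|e((x - y)ξ) - 1| ≤ 2√(2εK)`.
Finally `|e(t) - 1| = 2|sin(πt/η)| ≥ 4‖t‖` by Jordan's inequality.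
-/

open Pointwise

open Finset ComplexConjugate

open Complex in
theorem Complex.exists_sum_norm_sub_sq_eq {ι : Type*} (s : Finset ι) (f : ι → ℂ)
    (hf : ∀ i ∈ s, ‖f i‖ = 1) :
    ∃ θ : ℂ, ∑ i ∈ s, ‖θ - f i‖ ^ 2 = 2 * (#s - ‖∑ i ∈ s, f i‖) := by
  set S := ∑ i ∈ s, f i
  set θ := exp (arg S * I)
  have hθ : ‖θ‖ = 1 := norm_exp_ofReal_mul_I _
  -- `S = ‖S‖ θ`, so rotating `S` by `θ⁻¹ = conj θ` gives `‖S‖`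
  have hrot : ∑ i ∈ s, (θ * conj (f i)).re = ‖S‖ := by
    have hS : ∑ i ∈ s, f i = ‖S‖ * θ := (norm_mul_exp_arg_mul_I S).symm
    rw [← re_sum, ← mul_sum, ← map_sum, hS, map_mul, conj_ofReal, mul_left_comm, mul_conj,
      normSq_eq_norm_sq, hθ]
    simp
  refine ⟨θ, ?_⟩
  calc ∑ i ∈ s, ‖θ - f i‖ ^ 2 = ∑ i ∈ s, (2 - 2 * (θ * conj (f i)).re) := by
        refine sum_congr rfl fun i hi => ?_
        rw [Complex.sq_norm, normSq_sub, ← Complex.sq_norm, ← Complex.sq_norm, hθ, hf i hi]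
        ring
    _ = 2 * (#s - ‖S‖) := by
        rw [sum_sub_distrib, ← mul_sum, hrot, sum_const, nsmul_eq_mul]
        ring

theorem Finset.sum_comp_sub_le_sum_sub {G M : Type*} [AddGroup G] [DecidableEq G]
    [AddCommMonoid M] [PartialOrder M] [IsOrderedAddMonoid M] {A B : Finset G} {x : G}
    (hx : x ∈ A) {g : G → M} (hg : ∀ c, 0 ≤ g c) :
    ∑ b ∈ B, g (b - x) ≤ ∑ c ∈ B - A, g c := by
  rw [← sum_image fun _ _ _ _ => (sub_left_injective ·)]
  exact sum_le_sum_of_subset_of_nonneg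
    (image_subset_iff.2 fun b hb => sub_mem_sub hb hx) fun c _ _ => hg c

section LargeSpectrum

variable {G : Type*} [AddCommGroup G] [DecidableEq G] (ψ : AddChar G Circle)
  {A B : Finset G} {K ε : ℝ}

theorem AddChar.exists_sum_norm_sub_le (hcard : #(B - A) ≤ K * #B)
    (hspec : (1 - ε) * #(B - A) < ‖∑ c ∈ B - A, (ψ c : ℂ)‖) :
    ∃ θ : ℂ, ∀ x ∈ A, ∑ b ∈ B, ‖θ - ψ (b - x)‖ ≤ #B * √(2 * ε * K) := by
  obtain ⟨θ, hθ⟩ := Complex.exists_sum_norm_sub_sq_eq (B - A) (fun c => (ψ c : ℂ))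
    fun c _ => Circle.norm_coe _
  have hS : ‖∑ c ∈ B - A, (ψ c : ℂ)‖ ≤ #(B - A) :=
    (norm_sum_le _ _).trans (by simp [Circle.norm_coe])
  have hε : 0 ≤ ε := by nlinarith
  refine ⟨θ, fun x hx => ?_⟩
  calc ∑ b ∈ B, ‖θ - ψ (b - x)‖ ≤ √(#B ^ 2 * (2 * ε * K)) := Real.le_sqrt_of_sq_le <| calc
        (∑ b ∈ B, ‖θ - ψ (b - x)‖) ^ 2 ≤ #B * ∑ b ∈ B, ‖θ - ψ (b - x)‖ ^ 2 :=
          sq_sum_le_card_mul_sum_sq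
      _ ≤ #B * (2 * (#(B - A) - ‖∑ c ∈ B - A, (ψ c : ℂ)‖)) := by
          gcongr
          rw [← hθ]
          exact sum_comp_sub_le_sum_sub (g := fun c => ‖θ - ψ c‖ ^ 2) hx fun c => sq_nonneg _
      _ ≤ #B * (2 * ε * (K * #B)) := by
          gcongr #B * ?_
          nlinarith [mul_le_mul_of_nonneg_left hcard hε]
      _ = #B ^ 2 * (2 * ε * K) := by ring
    _ = #B * √(2 * ε * K) := by
      rw [Real.sqrt_mul (sq_nonneg _), Real.sqrt_sq (Nat.cast_nonneg _)]

theorem AddChar.norm_sub_one_le_of_lt_norm_sum_sub (hB : B.Nonempty) (hcard : #(B - A) ≤ K * #B)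
    (hspec : (1 - ε) * #(B - A) < ‖∑ c ∈ B - A, (ψ c : ℂ)‖) {x y : G} (hx : x ∈ A)
    (hy : y ∈ A) : ‖(ψ (x - y) : ℂ) - 1‖ ≤ 2 * √(2 * ε * K) := by
  obtain ⟨θ, hθ⟩ := ψ.exists_sum_norm_sub_le hcard hspec
  have hpt (b : G) : ‖(ψ (x - y) : ℂ) - 1‖ ≤ ‖θ - ψ (b - x)‖ + ‖θ - ψ (b - y)‖ := calc
    ‖(ψ (x - y) : ℂ) - 1‖ = ‖(ψ (b - y) : ℂ) - ψ (b - x)‖ := by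
      rw [show b - y = (x - y) + (b - x) by abel, map_add_eq_mul, Circle.coe_mul, ← sub_one_mul,
        norm_mul, Circle.norm_coe, mul_one]
    _ ≤ ‖(ψ (b - y) : ℂ) - θ‖ + ‖θ - ψ (b - x)‖ := norm_sub_le_norm_sub_add_norm_sub _ _ _
    _ = ‖θ - ψ (b - x)‖ + ‖θ - ψ (b - y)‖ := by rw [norm_sub_rev, add_comm]
  have hsum : #B * ‖(ψ (x - y) : ℂ) - 1‖ ≤ #B * (2 * √(2 * ε * K)) := calc
    #B * ‖(ψ (x - y) : ℂ) - 1‖ = ∑ _b ∈ B, ‖(ψ (x - y) : ℂ) - 1‖ := by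
      rw [sum_const, nsmul_eq_mul]
    _ ≤ ∑ b ∈ B, (‖θ - ψ (b - x)‖ + ‖θ - ψ (b - y)‖) := sum_le_sum fun b _ => hpt b
    _ = ∑ b ∈ B, ‖θ - ψ (b - x)‖ + ∑ b ∈ B, ‖θ - ψ (b - y)‖ := sum_add_distrib
    _ ≤ #B * √(2 * ε * K) + #B * √(2 * ε * K) := add_le_add (hθ x hx) (hθ y hy)
    _ = #B * (2 * √(2 * ε * K)) := by ring
  exact le_of_mul_le_mul_left hsum (by exact_mod_cast hB.card_pos)

end LargeSpectrum

open Real in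
theorem four_mul_zmodNorm_le_norm_toCircle_sub_one {η : ℕ} [NeZero η] (w : ZMod η) :
    4 * zmodNorm w ≤ ‖(ZMod.toCircle w : ℂ) - 1‖ := by
  set m := min w.val (η - w.val) with hm_def
  have hη : (0 : ℝ) < η := by exact_mod_cast NeZero.pos η
  have hm : (2 * m : ℝ) ≤ η := by exact_mod_cast (by omega : 2 * m ≤ η)
  have hsin : sin (π * w.val / η) = sin (π * m / η) := by
    rcases min_cases w.val (η - w.val) with ⟨h, _⟩ | ⟨h, _⟩
    · rw [hm_def, h]
    · rw [hm_def, h, Nat.cast_sub (ZMod.val_lt w).le, ← sin_pi_sub]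
      congr 1
      field_simp
  have hjordan : 2 / π * (π * m / η) ≤ sin (π * m / η) :=
    mul_le_sin (by positivity) (by rw [div_le_div_iff₀ hη two_pos]; nlinarith [pi_pos])
  have harg : 2 * π * Complex.I * w.val / η = Complex.I * ↑(2 * π * w.val / η) := by
    push_cast
    ring
  rw [ZMod.toCircle_apply, harg, Complex.norm_exp_I_mul_ofReal_sub_one,
    show 2 * π * w.val / η / 2 = π * w.val / η by ring, hsin, Real.norm_eq_abs]
  calc 4 * zmodNorm w = 2 * (2 / π * (π * m / η)) := by
        rw [zmodNorm]
        field_simp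
        ring
    _ ≤ 2 * sin (π * m / η) := by gcongr
    _ ≤ |2 * sin (π * m / η)| := le_abs_self _

theorem zmodFourier_eq_sum_toCircle {η : ℕ} [NeZero η] (A : Finset (ZMod η)) (j : ZMod η) :
    zmodFourier A j = (#A : ℂ)⁻¹ * ∑ a ∈ A, (ZMod.toCircle (a * j) : ℂ) := by
  simp only [zmodFourier, ZMod.toCircle_apply]

theorem stmt_3_general (η : ℕ) (A B : Finset (ZMod η))
    (hAB : A ⊆ B) (K ε : ℝ)
    (hcard : ((B - A).card : ℝ) ≤ K * B.card) :
    ∀ x ∈ A, ∀ y ∈ A, ∀ ξ : ZMod η,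
      ‖zmodFourier (B - A) ξ‖ > 1 - ε →
      zmodNorm ((x - y) * ξ) ≤ Real.sqrt (8 * ε * K) := by
  intro x hx y hy ξ hξ
  rcases eq_or_ne η 0 with rfl | hη
  · simp [zmodNorm] -- `zmodNorm` divides by `η = 0`
  have : NeZero η := ⟨hη⟩
  have hB : B.Nonempty := ⟨x, hAB hx⟩
  set ψ := (ZMod.toCircle : AddChar (ZMod η) Circle).mulShift ξ
  have hspec : (1 - ε) * #(B - A) < ‖∑ c ∈ B - A, (ψ c : ℂ)‖ := by
    have hC : (0 : ℝ) < #(B - A) := by exact_mod_cast (hB.sub ⟨x, hx⟩).card_pos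
    rw [zmodFourier_eq_sum_toCircle, norm_mul, norm_inv, Complex.norm_natCast, gt_iff_lt,
      inv_mul_eq_div, lt_div_iff₀ hC] at hξ
    simpa [ψ, mul_comm] using hξ
  calc zmodNorm ((x - y) * ξ) ≤ 4 * zmodNorm ((x - y) * ξ) :=
        le_mul_of_one_le_left (by unfold zmodNorm; positivity) (by norm_num)
    _ ≤ ‖(ψ (x - y) : ℂ) - 1‖ := by
        simpa [ψ, mul_comm] using four_mul_zmodNorm_le_norm_toCircle_sub_one ((x - y) * ξ)
    _ ≤ 2 * √(2 * ε * K) := ψ.norm_sub_one_le_of_lt_norm_sum_sub hB hcard hspec hx hy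
    _ = √(8 * ε * K) := by
        rw [show 8 * ε * K = 2 ^ 2 * (2 * ε * K) by ring,
          Real.sqrt_mul (by norm_num : (0 : ℝ) ≤ 2 ^ 2),
          Real.sqrt_sq zero_le_two]

/-- If `A ⊆ B`, `0 ∈ A`, `K ≥ 1`, `0 < ε < 1`, and
`|B − A| ≤ K·|B|`, then `A − A ⊆ Bohr(Spec_{1−ε}(B − A), √(8εK))`. -/
theorem stmt_3 (η : ℕ) (hη : 1 ≤ η) (A B : Finset (ZMod η))
    (hAB : A ⊆ B) (h0 : (0 : ZMod η) ∈ A)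
    (K ε : ℝ) (hK : 1 ≤ K) (hε0 : 0 < ε) (hε1 : ε < 1)
    (hcard : ((B - A).card : ℝ) ≤ K * B.card) :
    ∀ x ∈ A, ∀ y ∈ A, ∀ ξ : ZMod η,
      ‖zmodFourier (B - A) ξ‖ > 1 - ε →
      zmodNorm ((x - y) * ξ) ≤ Real.sqrt (8 * ε * K) :=
  stmt_3_general η A B hAB K ε hcard
end

section
/- Let η ≥ 2 be an integer and let A be a finite subset of ZMod η with 0 ∈ A. Then there exists a natural number κ with 1 ≤ κ ≤ log₂ η + 2 such that Spec_{1−1/576}(A − κA) ⊆ Bohr(A, 1/6), where A − κA = {a₀ − a₁ − ⋯ − a_κ : a₀, a₁, …, a_κ ∈ A} is the difference of A and the κ-fold iterated sumset of A. -/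
open Pointwise

/-!
Write `S κ = A - κA`. Since `0 ∈ A`, both `S κ` and `S κ - a` (for `a ∈ A`) lie in `S (κ + 1)`.
If `ξ` is in the large spectrum of `T = S (κ + 1)`, then `e(yξ)` is almost aligned with the
Fourier sum for almost every `y ∈ T`. If moreover `‖aξ‖ > 1/6`, then `|1 + e(aξ)| ≤ √3 < 2`,
so `x` and `x - a` cannot both be aligned, and `|T| ≥ 2 |S κ|`. The sets `S κ` cannot double
`log₂ η + 1` times in a row inside `ZMod η`, so some `κ ≤ log₂ η + 1` has no such bad `ξ`.
-/

open Finset Real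

theorem zmodNorm_eq_min {η : ℕ} [NeZero η] (z : ZMod η) :
    zmodNorm z = min ((z.val : ℝ) / η) (1 - z.val / η) := by
  have hη : (0 : ℝ) < η := Nat.cast_pos.mpr (NeZero.pos η)
  rw [zmodNorm, Nat.cast_min, Nat.cast_sub z.val_lt.le, ← min_div_div_right hη.le, sub_div,
    div_self hη.ne']

theorem Real.cos_two_pi_mul_le_half {v : ℝ} (h₁ : 1 / 6 ≤ v) (h₂ : v ≤ 5 / 6) :
    Real.cos (2 * π * v) ≤ 1 / 2 := by
  have hπ := Real.pi_pos
  rw [← Real.cos_pi_div_three]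
  rcases le_total v (1 / 2) with hv | hv
  · exact Real.cos_le_cos_of_nonneg_of_le_pi (by positivity) (by nlinarith) (by nlinarith)
  · rw [← Real.cos_two_pi_sub]
    exact Real.cos_le_cos_of_nonneg_of_le_pi (by positivity) (by nlinarith) (by nlinarith)

theorem Circle.norm_one_add_exp_sq (t : ℝ) :
    ‖1 + (Circle.exp t : ℂ)‖ ^ 2 = 2 + 2 * Real.cos t := by
  rw [Complex.sq_norm, Complex.normSq_apply, Circle.coe_exp]
  simp only [Complex.add_re, Complex.add_im, Complex.one_re, Complex.one_im,
    Complex.exp_ofReal_mul_I_re, Complex.exp_ofReal_mul_I_im]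
  nlinarith [Real.sin_sq_add_cos_sq t]

theorem ZMod.norm_one_add_toCircle_sq_le {η : ℕ} [NeZero η] {z : ZMod η}
    (hz : 1 / 6 < zmodNorm z) : ‖1 + (ZMod.toCircle z : ℂ)‖ ^ 2 ≤ 3 := by
  rw [zmodNorm_eq_min, lt_min_iff] at hz
  rw [ZMod.toCircle_eq_circleExp, Circle.norm_one_add_exp_sq]
  linarith [Real.cos_two_pi_mul_le_half (v := z.val / η) hz.1.le (by linarith)]

open ComplexConjugate in
theorem AddChar.two_sub_norm_one_add_mul_card_le {G : Type*} [AddGroup G] [DecidableEq G]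
    (ψ : AddChar G Circle) {T S : Finset G} {a : G}
    (hST : S ⊆ T) (hSa : ∀ x ∈ S, x - a ∈ T) :
    (2 - ‖1 + (ψ a : ℂ)‖) * #S ≤ 2 * (#T - ‖∑ y ∈ T, (ψ y : ℂ)‖) := by
  set w := ∑ y ∈ T, (ψ y : ℂ)
  set R := ‖w‖
  have hST' : (#S : ℝ) ≤ #T := by exact_mod_cast card_le_card hST
  obtain hR | hR : 0 = R ∨ 0 < R := (norm_nonneg w).eq_or_lt
  · nlinarith [norm_nonneg (1 + (ψ a : ℂ)), (#S).cast_nonneg (α := ℝ)]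
  -- `d y ≥ 0` measures how far `ψ y` is from pointing in the direction of `w`.
  set d : G → ℝ := fun y ↦ R - (ψ y * conj w).re
  have hd_nonneg : ∀ y, 0 ≤ d y := fun y ↦ by
    have := Complex.re_le_norm (ψ y * conj w)
    simp only [norm_mul, Circle.norm_coe, one_mul, Complex.norm_conj] at this
    exact sub_nonneg.mpr this
  have hd_sum : ∑ y ∈ T, d y = #T * R - R ^ 2 := by
    simp only [d, sum_sub_distrib, sum_const, nsmul_eq_mul, ← Complex.re_sum, ← sum_mul,
      Complex.mul_conj, Complex.normSq_eq_norm_sq, Complex.ofReal_re, w, R]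
  have hd_pair : ∀ x, (2 - ‖1 + (ψ a : ℂ)‖) * R ≤ d (x - a) + d x := fun x ↦ by
    have hx : (ψ x : ℂ) = ψ (x - a) * (1 + ψ a) - ψ (x - a) := by
      rw [← sub_add_cancel x a, AddChar.map_add_eq_mul, add_sub_cancel_right]
      push_cast; ring
    have := Complex.re_le_norm (ψ (x - a) * (1 + ψ a) * conj w)
    simp only [norm_mul, Circle.norm_coe, one_mul, Complex.norm_conj] at this
    simp only [d, hx, sub_mul, Complex.sub_re]
    nlinarith
  have hd_shift : ∑ x ∈ S, d (x - a) ≤ ∑ y ∈ T, d y := by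
    rw [← sum_image (g := (· - a)) (sub_left_injective.injOn)]
    exact sum_le_sum_of_subset_of_nonneg (image_subset_iff.mpr hSa) fun y _ _ ↦ hd_nonneg y
  have hd_sub : ∑ x ∈ S, d x ≤ ∑ y ∈ T, d y :=
    sum_le_sum_of_subset_of_nonneg hST fun y _ _ ↦ hd_nonneg y
  refine le_of_mul_le_mul_right ?_ hR
  calc (2 - ‖1 + (ψ a : ℂ)‖) * #S * R = ∑ x ∈ S, (2 - ‖1 + (ψ a : ℂ)‖) * R := by
        rw [sum_const, nsmul_eq_mul]; ring
    _ ≤ ∑ x ∈ S, (d (x - a) + d x) := sum_le_sum fun x _ ↦ hd_pair x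
    _ ≤ 2 * (#T - R) * R := by rw [sum_add_distrib]; linarith

theorem zmodFourier_eq_inv_card_mul_sum_toCircle {η : ℕ} [NeZero η] (A : Finset (ZMod η))
    (ξ : ZMod η) :
    zmodFourier A ξ = (#A : ℂ)⁻¹ * ∑ a ∈ A, (ZMod.toCircle (a * ξ) : ℂ) := by
  simp only [zmodFourier, ZMod.toCircle_apply]

theorem two_mul_card_le_card_of_norm_zmodFourier_gt {η : ℕ} [NeZero η] {S T : Finset (ZMod η)}
    {a ξ : ZMod η} (hST : S ⊆ T) (hSa : ∀ x ∈ S, x - a ∈ T)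
    (hξ : ‖zmodFourier T ξ‖ > 1 - 1 / 576) (ha : 1 / 6 < zmodNorm (a * ξ)) :
    2 * #S ≤ #T := by
  let ψ : AddChar (ZMod η) Circle := ZMod.toCircle.compAddMonoidHom (AddMonoidHom.mulRight ξ)
  have hψ : ∀ y, ψ y = ZMod.toCircle (y * ξ) := fun _ ↦ rfl
  have hT : (0 : ℝ) < #T := by
    rcases T.eq_empty_or_nonempty with rfl | hT
    · norm_num [zmodFourier] at hξ
    · exact_mod_cast hT.card_pos
  have hsum : (1 - 1 / 576) * #T < ‖∑ y ∈ T, (ψ y : ℂ)‖ := by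
    rw [zmodFourier_eq_inv_card_mul_sum_toCircle, norm_mul, norm_inv, Complex.norm_natCast,
      gt_iff_lt, lt_inv_mul_iff₀ hT, mul_comm] at hξ
    simpa only [hψ] using hξ
  have hpair := ψ.two_sub_norm_one_add_mul_card_le hST hSa
  have hψa : ‖1 + (ψ a : ℂ)‖ ≤ 7 / 4 :=
    abs_le_of_sq_le_sq' (by rw [hψ]; nlinarith [ZMod.norm_one_add_toCircle_sq_le ha])
      (by norm_num) |>.2
  have : (2 * #S : ℝ) ≤ #T := by nlinarith [norm_nonneg (1 + (ψ a : ℂ))]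
  exact_mod_cast this

section Sumset

variable {η : ℕ} {A : Finset (ZMod η)}

theorem iterSumset_subset_succ (h0 : (0 : ZMod η) ∈ A) (κ : ℕ) :
    iterSumset A κ ⊆ iterSumset A (κ + 1) :=
  subset_add_left _ h0

theorem sub_mem_sub_iterSumset_succ {κ : ℕ} {x a : ZMod η} (hx : x ∈ A - iterSumset A κ)
    (ha : a ∈ A) : x - a ∈ A - iterSumset A (κ + 1) := by
  obtain ⟨p, hp, m, hm, rfl⟩ := mem_sub.mp hx
  exact mem_sub.mpr ⟨p, hp, m + a, add_mem_add hm ha, by abel⟩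

end Sumset

theorem Finset.exists_card_succ_lt_two_mul {α : Type*} [Fintype α] (s : ℕ → Finset α)
    (hs : (s 0).Nonempty) :
    ∃ k ≤ Nat.log 2 (Fintype.card α), #(s (k + 1)) < 2 * #(s k) := by
  by_contra! hdouble
  have hpow : ∀ k ≤ Nat.log 2 (Fintype.card α) + 1, 2 ^ k ≤ #(s k) := by
    intro k
    induction k with
    | zero => simpa using hs.card_pos
    | succ k ih =>
      intro hk
      rw [pow_succ']
      exact (Nat.mul_le_mul_left 2 (ih (by omega))).trans (hdouble k (by omega))
  exact (hpow _ le_rfl).not_gt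
    ((card_le_univ _).trans_lt (Nat.lt_pow_succ_log_self one_lt_two _))

/-- For any finite `A ⊆ ZMod η` with `0 ∈ A` there is
`κ ≤ log₂ η + 2` such that `Spec_{1−1/576}(A − κA) ⊆ Bohr(A, 1/6)`. -/
theorem stmt_4 (η : ℕ) (hη : 2 ≤ η) (A : Finset (ZMod η)) (h0 : (0 : ZMod η) ∈ A) :
    ∃ κ : ℕ, 1 ≤ κ ∧ (κ : ℝ) ≤ Real.logb 2 η + 2 ∧
      ∀ ξ : ZMod η,
        ‖zmodFourier (A - iterSumset A κ) ξ‖ > 1 - 1 / 576 →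
        ∀ a ∈ A, zmodNorm (a * ξ) ≤ 1 / 6 := by
  have : NeZero η := ⟨by omega⟩
  obtain ⟨k, hk, hsmall⟩ := exists_card_succ_lt_two_mul (fun κ ↦ A - iterSumset A κ)
    (Nonempty.sub ⟨0, h0⟩ (singleton_nonempty 0))
  rw [ZMod.card] at hk
  refine ⟨k + 1, le_add_self, ?_, fun ξ hξ a ha ↦ ?_⟩
  · have hlog : (k : ℝ) ≤ Real.logb 2 η := by
      simpa using (Nat.cast_le.mpr hk).trans (Real.natLog_le_logb η 2)
    push_cast
    linarith
  · by_contra! hfar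
    exact hsmall.not_ge <| two_mul_card_le_card_of_norm_zmodFourier_gt
      (sub_subset_sub_left (iterSumset_subset_succ h0 k))
      (fun x hx ↦ sub_mem_sub_iterSumset_succ hx ha) hξ hfar
end

section
/- Let G be a finite connected symmetric directed multigraph, let φ be a circulation on G, and let δ be a generalized intersection distance measure for φ. Define the cycle-adjacency graph 𝒢 whose vertices are the orbits of φ acting on E, two distinct orbits being adjacent if and only if they contain arcs f and f′ with pred f = pred f′; for arcs e, e′ let Δ(e, e′) denote the graph distance in 𝒢 between the orbit of e and the orbit of e′. Then for all arcs e, e′ and every x ∈ ℤ: δ x e′ e′ ≤ δ x e e + 2·Δ(e, e′). -/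
/-! Moving to another arc of the same `φ`-orbit does not change `δ x e e`, since
`δ 1 e (φ e) = 0` and `δ (-1) (φ e) e = 0`; passing to an arc with the same tail
costs at most `2`, since `δ 0` between two such arcs is at most `1` in either
direction. Both facts are instances of the triangle-and-symmetry bound
`δ x b b ≤ δ x a a + 2 δ y a b`, and summing the second one along a chain of
`D` adjacency hops between the two orbits gives the claim. -/

namespace IntersectionDistance

variable {E : Type*} {δ : ℤ → E → E → ℕ}
  (hsymm : ∀ (x : ℤ) (a b : E), δ (-x) b a = δ x a b)
  (htri : ∀ (x y : ℤ) (a b c : E), δ (x + y) a c ≤ δ x a b + δ y b c)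
include hsymm htri

theorem diag_le_diag_add_two_mul (x y : ℤ) (a b : E) : δ x b b ≤ δ x a a + 2 * δ y a b :=
  calc δ x b b = δ (-y + (x + y)) b b := by rw [neg_add_cancel_comm_assoc]
    _ ≤ δ (-y) b a + (δ x a a + δ y a b) :=
        (htri _ _ b a b).trans (Nat.add_le_add_left (htri x y a a b) _)
    _ = δ x a a + 2 * δ y a b := by rw [hsymm]; ring

theorem diag_le_add_two_of_pred_eq {V : Type*} (pred : E → V)
    (hint : ∀ a b, pred a = pred b → δ 0 a b ≤ 1)
    {a b : E} (hab : pred a = pred b) (x : ℤ) : δ x b b ≤ δ x a a + 2 := by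
  have := diag_le_diag_add_two_mul hsymm htri x 0 a b
  have := hint a b hab
  omega

variable (φ : Equiv.Perm E) (hφ : ∀ e, δ 1 e (φ e) = 0)
include hφ

theorem diag_apply_eq (x : ℤ) (a : E) : δ x (φ a) (φ a) = δ x a a := by
  have hforth := diag_le_diag_add_two_mul hsymm htri x 1 a (φ a)
  have hback := diag_le_diag_add_two_mul hsymm htri x (-1) (φ a) a
  rw [hφ] at hforth
  rw [hsymm, hφ] at hback
  omega

theorem diag_eq_of_sameCycle {a b : E} (hab : φ.SameCycle a b) (x : ℤ) :
    δ x a a = δ x b b := by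
  obtain ⟨z, rfl⟩ := hab
  induction z using Int.induction_on generalizing a with
  | zero => rfl
  | succ k ih =>
    rw [zpow_add_one, Equiv.Perm.mul_apply, ← ih, diag_apply_eq hsymm htri φ hφ]
  | pred k ih =>
    rw [zpow_sub_one, Equiv.Perm.mul_apply, ← ih,
      ← diag_apply_eq hsymm htri φ hφ x (φ⁻¹ a), Equiv.Perm.coe_inv, Equiv.apply_symm_apply]

end IntersectionDistance

open IntersectionDistance

theorem stmt_10_general {V E : Type}
    (pred : E → V)
    (φ : Equiv.Perm E)
    -- δ is a generalized intersection distance measure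
    (δ : ℤ → E → E → ℕ)
    (hδ1 : ∀ e, δ 1 e (φ e) = 0)
    (hδint : ∀ e₁ e₂, pred e₁ = pred e₂ → δ 0 e₁ e₂ ≤ 1)
    (hδsymm : ∀ (x : ℤ) (e₁ e₂ : E), δ (-x) e₂ e₁ = δ x e₁ e₂)
    (hδtri : ∀ (x y : ℤ) (e₁ e₂ e₃ : E), δ (x + y) e₁ e₃ ≤ δ x e₁ e₂ + δ y e₂ e₃) :
    ∀ (e e' : E) (x : ℤ) (D : ℕ),
      (∃ f : ℕ → E,
        (∃ z : ℤ, (φ ^ z) (f 0) = e) ∧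
        (∃ z : ℤ, (φ ^ z) (f D) = e') ∧
        (∀ i < D, ∃ a b : E,
          (∃ z : ℤ, (φ ^ z) (f i) = a) ∧
          (∃ z : ℤ, (φ ^ z) (f (i + 1)) = b) ∧
          pred a = pred b)) →
      δ x e' e' ≤ δ x e e + 2 * D := by
  rintro e e' x D ⟨f, hstart, hend, hchain⟩
  have hop : ∀ i < D, δ x (f (i + 1)) (f (i + 1)) ≤ δ x (f i) (f i) + 2 := by
    intro i hi
    obtain ⟨a, b, ha, hb, hab⟩ := hchain i hi
    rw [diag_eq_of_sameCycle hδsymm hδtri φ hδ1 ha,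
      diag_eq_of_sameCycle hδsymm hδtri φ hδ1 hb]
    exact diag_le_add_two_of_pred_eq hδsymm hδtri pred hδint hab x
  have hpath : ∀ i ≤ D, δ x (f i) (f i) ≤ δ x (f 0) (f 0) + 2 * i := by
    intro i hi
    induction i with
    | zero => simp
    | succ k ih =>
      have := hop k hi
      have := ih (by omega)
      omega
  rw [← diag_eq_of_sameCycle hδsymm hδtri φ hδ1 hstart,
    ← diag_eq_of_sameCycle hδsymm hδtri φ hδ1 hend]
  exact hpath D le_rfl

/-- For any circulation `φ` on a finite connected symmetric
directed multigraph and any generalized intersection distance measure `δ` for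
`φ`, and any arcs `e, e'` and `x ∈ ℤ`: `δ x e' e' ≤ δ x e e + 2·Δ(e,e')`, where
`Δ(e,e')` is the distance between the orbits of `e` and `e'` in the
cycle-adjacency graph.  (Formulated below via chains: for every `D` such that
there is a chain of `D` adjacency hops between the orbit of `e` and the orbit
of `e'`, the bound `δ x e' e' ≤ δ x e e + 2·D` holds; in particular it holds
for `D = Δ(e,e')`.) -/
theorem stmt_10 {V E : Type} [Fintype V] [Fintype E] [Nonempty V]
    (pred succ : E → V) (rev : E → E)
    (hrev : ∀ e, rev (rev e) = e)
    (hpredrev : ∀ e, pred (rev e) = succ e)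
    (hsuccrev : ∀ e, succ (rev e) = pred e)
    (hrevloop : ∀ e, pred e = succ e → rev e = e)
    -- connectedness of the underlying undirected graph
    (hconn : ∀ u v : V, Relation.ReflTransGen
      (fun a b => ∃ e, (pred e = a ∧ succ e = b) ∨ (pred e = b ∧ succ e = a)) u v)
    (φ : Equiv.Perm E) (hφ : ∀ e, succ e = pred (φ e))
    -- δ is a generalized intersection distance measure
    (δ : ℤ → E → E → ℕ)
    (hδ0 : ∀ e, δ 0 e e = 0)
    (hδ1 : ∀ e, δ 1 e (φ e) = 0)
    (hδint : ∀ e₁ e₂, pred e₁ = pred e₂ → δ 0 e₁ e₂ ≤ 1)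
    (hδsymm : ∀ (x : ℤ) (e₁ e₂ : E), δ (-x) e₂ e₁ = δ x e₁ e₂)
    (hδtri : ∀ (x y : ℤ) (e₁ e₂ e₃ : E), δ (x + y) e₁ e₃ ≤ δ x e₁ e₂ + δ y e₂ e₃) :
    ∀ (e e' : E) (x : ℤ) (D : ℕ),
      (∃ f : ℕ → E,
        (∃ z : ℤ, (φ ^ z) (f 0) = e) ∧
        (∃ z : ℤ, (φ ^ z) (f D) = e') ∧
        (∀ i < D, ∃ a b : E,
          (∃ z : ℤ, (φ ^ z) (f i) = a) ∧
          (∃ z : ℤ, (φ ^ z) (f (i + 1)) = b) ∧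
          pred a = pred b)) →
      δ x e' e' ≤ δ x e e + 2 * D :=
  stmt_10_general pred φ δ hδ1 hδint hδsymm hδtri
end

section
/- Let G be a finite symmetric directed multigraph, let φ be a circulation on G, and let δ be a generalized intersection distance measure for φ. Then for every arc e: δ 2 e e ≤ 2 and δ 4 e e ≤ 3. -/
/-- For any circulation `φ` on a finite symmetric directed
multigraph and any generalized intersection distance measure `δ` for `φ`,
every arc `e` satisfies `δ 2 e e ≤ 2` and `δ 4 e e ≤ 3`. -/
theorem stmt_11 {V E : Type} [Fintype V] [Fintype E] [Nonempty V]
    (pred succ : E → V) (rev : E → E)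
    (hrev : ∀ e, rev (rev e) = e)
    (hpredrev : ∀ e, pred (rev e) = succ e)
    (hsuccrev : ∀ e, succ (rev e) = pred e)
    (hrevloop : ∀ e, pred e = succ e → rev e = e)
    (φ : Equiv.Perm E) (hφ : ∀ e, succ e = pred (φ e))
    -- δ is a generalized intersection distance measure
    (δ : ℤ → E → E → ℕ)
    (hδ0 : ∀ e, δ 0 e e = 0)
    (hδ1 : ∀ e, δ 1 e (φ e) = 0)
    (hδint : ∀ e₁ e₂, pred e₁ = pred e₂ → δ 0 e₁ e₂ ≤ 1)
    (hδsymm : ∀ (x : ℤ) (e₁ e₂ : E), δ (-x) e₂ e₁ = δ x e₁ e₂)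
    (hδtri : ∀ (x y : ℤ) (e₁ e₂ e₃ : E), δ (x + y) e₁ e₃ ≤ δ x e₁ e₂ + δ y e₂ e₃) :
    ∀ e : E, δ 2 e e ≤ 2 ∧ δ 4 e e ≤ 3 := by
  -- key lemma: δ 1 a b ≤ 1 whenever succ a = pred b
  have L : ∀ a b : E, succ a = pred b → δ 1 a b ≤ 1 := by
    intro a b hab
    have h1 : δ 1 a b ≤ δ 1 a (φ a) + δ 0 (φ a) b := by
      have := hδtri 1 0 a (φ a) b
      simpa using this
    have h2 : δ 0 (φ a) b ≤ 1 := hδint _ _ (by rw [← hφ a, hab])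
    calc δ 1 a b ≤ δ 1 a (φ a) + δ 0 (φ a) b := h1
      _ = δ 0 (φ a) b := by rw [hδ1]; ring
      _ ≤ 1 := h2
  intro e
  constructor
  · -- δ 2 e e ≤ δ 1 e (rev e) + δ 1 (rev e) e ≤ 1 + 1
    have h := hδtri 1 1 e (rev e) e
    have h1 : δ 1 e (rev e) ≤ 1 := L _ _ (hpredrev e).symm
    have h2 : δ 1 (rev e) e ≤ 1 := L _ _ (hsuccrev e)
    calc δ 2 e e = δ (1 + 1) e e := by norm_num
      _ ≤ δ 1 e (rev e) + δ 1 (rev e) e := h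
      _ ≤ 1 + 1 := Nat.add_le_add h1 h2
  · set m := rev (φ e) with hm
    -- δ 2 e m ≤ 1
    have hA : δ 2 e m ≤ 1 := by
      have t1 : δ 2 e m ≤ δ 1 e (φ e) + δ 1 (φ e) m := by
        have := hδtri 1 1 e (φ e) m
        simpa using this
      have t2 : δ 1 (φ e) m ≤ δ 1 (φ e) (φ (φ e)) + δ 0 (φ (φ e)) m := by
        have := hδtri 1 0 (φ e) (φ (φ e)) m
        simpa using this
      have t3 : δ 0 (φ (φ e)) m ≤ 1 :=
        hδint _ _ (by rw [← hφ (φ e), hm, hpredrev])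
      calc δ 2 e m ≤ δ 1 e (φ e) + δ 1 (φ e) m := t1
        _ = δ 1 (φ e) m := by rw [hδ1]; ring
        _ ≤ δ 1 (φ e) (φ (φ e)) + δ 0 (φ (φ e)) m := t2
        _ = δ 0 (φ (φ e)) m := by rw [hδ1]; ring
        _ ≤ 1 := t3
    -- δ 2 m e ≤ 2
    have hB : δ 2 m e ≤ 2 := by
      have t1 : δ 2 m e ≤ δ 1 m (rev e) + δ 1 (rev e) e := by
        have := hδtri 1 1 m (rev e) e
        simpa using this
      have h1 : δ 1 m (rev e) ≤ 1 :=
        L _ _ (by rw [hm, hsuccrev, hpredrev, hφ])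
      have h2 : δ 1 (rev e) e ≤ 1 := L _ _ (hsuccrev e)
      omega
    calc δ 4 e e = δ (2 + 2) e e := by norm_num
      _ ≤ δ 2 e m + δ 2 m e := hδtri 2 2 e m e
      _ ≤ 1 + 2 := Nat.add_le_add hA hB
end

section
/- There is an absolute constant C > 0 such that the following holds. Let G be a finite connected symmetric directed multigraph with n vertices and m arcs which is a tree, i.e., pred e ≠ succ e for every arc e and m = 2(n − 1). Let φ be a circulation on G, let δ be a generalized intersection distance measure for φ, let e be an arc, and let B ≥ 1 be an integer. Then there exists an integer x with B ≤ x ≤ 2B such that δ x e e ≤ C. -/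
/-!
Follow the orbit `e, φ e, φ² e, …`, which returns to `e` after `p = orderOf φ` steps. The
triangle inequality and `δ 1 f (φ f) = 0` give `δ k e (φᵏ e) = 0`, hence `δ d e e ≤ 1` as soon
as `φᵃ e` and `φᵃ⁺ᵈ e` leave from the same vertex. If `p ≤ B`, a multiple of `p` lies in
`[B, 2B]` and `δ` vanishes there. Otherwise the start vertices along the orbit form a closed
walk of length `p ≥ B` in the underlying simple graph, which is a tree because each of its edges
carries the two arcs `a` and `rev a`. In a tree the first edge of a closed walk is a bridge, so
the walk returns across it and splits into two shorter closed walks; recursing into one of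
length `≥ B`, or else taking the first return or the whole walk, yields a revisit after a
number of steps in `[B, 2B]`.
-/

open SimpleGraph

lemma Nat.exists_mul_mem_Icc_of_le {p B : ℕ} (hp : 0 < p) (hpB : p ≤ B) :
    ∃ k, p * k ∈ Set.Icc B (2 * B) := by
  have hlt : B < B / p * p + p := Nat.lt_div_mul_add hp
  have hle : B / p * p ≤ B := Nat.div_mul_le_self B p
  exact ⟨B / p + 1, by nlinarith, by nlinarith⟩

namespace SimpleGraph

variable {V : Type*} {G : SimpleGraph V}

lemma exists_return_across_isBridge {L : ℕ} {v : ℕ → V}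
    (hadj : ∀ i < L, G.Adj (v i) (v (i + 1))) (hclosed : v L = v 0) (hL : 1 ≤ L)
    (hbridge : G.IsBridge s(v 0, v 1)) :
    ∃ s, 1 ≤ s ∧ s < L ∧ v s = v 1 ∧ v (s + 1) = v 0 := by
  classical
  rw [isBridge_iff] at hbridge
  set H := G.deleteEdges {s(v 0, v 1)}
  have hLnot : ¬ H.Reachable (v 1) (v L) := hclosed ▸ fun h => hbridge h.symm
  -- the first time the walk leaves the component of `v 1` in `G` minus the bridge
  have hex : ∃ t, 1 ≤ t ∧ ¬ H.Reachable (v 1) (v t) := ⟨L, hL, hLnot⟩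
  obtain ⟨ht1, hnot⟩ := Nat.find_spec hex
  have htL : Nat.find hex ≤ L := Nat.find_min' hex ⟨hL, hLnot⟩
  obtain ⟨s, hs⟩ : ∃ s, Nat.find hex = s + 1 := Nat.exists_eq_add_one_of_ne_zero (by omega)
  rw [hs] at hnot htL
  have hs1 : 1 ≤ s := by
    by_contra h
    obtain rfl : s = 0 := by omega
    exact hnot (Reachable.refl _)
  have hreach : H.Reachable (v 1) (v s) := by
    by_contra h
    exact Nat.find_min hex (by omega) ⟨hs1, h⟩
  have hedge : s(v s, v (s + 1)) = s(v 0, v 1) := by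
    by_contra hne
    exact hnot (hreach.trans (deleteEdges_adj.2 ⟨hadj s (by omega), hne⟩).reachable)
  rcases Sym2.eq_iff.mp hedge with ⟨hv0, -⟩ | ⟨hv1, hv0⟩
  · exact absurd (hv0 ▸ hreach).symm hbridge
  · exact ⟨s, hs1, by omega, hv1, hv0⟩

theorem IsAcyclic.exists_window_revisit (hG : G.IsAcyclic) {B : ℕ} (hB : 1 ≤ B) :
    ∀ (L : ℕ) (v : ℕ → V), (∀ i < L, G.Adj (v i) (v (i + 1))) → v L = v 0 → B ≤ L →
      ∃ a d, B ≤ d ∧ d ≤ 2 * B ∧ v (a + d) = v a := by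
  intro L
  induction L using Nat.strong_induction_on with
  | _ L IH =>
  intro v hadj hclosed hBL
  obtain ⟨s, hs1, hsL, hvs, hvs1⟩ := exists_return_across_isBridge hadj hclosed (by omega)
    (isAcyclic_iff_forall_adj_isBridge.1 hG (hadj 0 (by omega)))
  by_cases hinner : B ≤ s - 1
  · obtain ⟨a, d, hd1, hd2, hv⟩ := IH (s - 1) (by omega) (fun i => v (i + 1))
      (fun i hi => hadj (i + 1) (by omega)) (by simp only [Nat.sub_add_cancel hs1, hvs]) hinner
    exact ⟨a + 1, d, hd1, hd2, by simpa only [Nat.add_right_comm] using hv⟩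
  by_cases houter : B ≤ L - (s + 1)
  · obtain ⟨a, d, hd1, hd2, hv⟩ := IH (L - (s + 1)) (by omega) (fun i => v (i + (s + 1)))
      (fun i hi => by simpa only [Nat.add_right_comm] using hadj (i + (s + 1)) (by omega))
      (by simp only [Nat.sub_add_cancel hsL, hclosed, zero_add, hvs1]) houter
    exact ⟨a + (s + 1), d, hd1, hd2, by simpa only [Nat.add_right_comm] using hv⟩
  by_cases hfirst : B ≤ s + 1
  · exact ⟨0, s + 1, hfirst, by omega, by simpa only [zero_add] using hvs1⟩
  · exact ⟨0, L, hBL, by omega, by simpa only [zero_add] using hclosed⟩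

end SimpleGraph

section UnderlyingGraph

variable {V E : Type*} (pred succ : E → V)

def underlyingGraph : SimpleGraph V :=
  SimpleGraph.fromRel fun a b => ∃ e, pred e = a ∧ succ e = b

variable {pred succ}

lemma underlyingGraph_connected [Nonempty V]
    (hconn : ∀ u v : V, Relation.ReflTransGen
      (fun a b => ∃ e, (pred e = a ∧ succ e = b) ∨ (pred e = b ∧ succ e = a)) u v) :
    (underlyingGraph pred succ).Connected := by
  refine (connected_iff _).2 ⟨fun u v => ?_, ‹_›⟩
  refine Relation.reflTransGen_le_of_equivalence_of_le (reachable_is_equivalence _)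
    (fun a b ⟨e, hab⟩ => ?_) u v (hconn u v)
  by_cases h : a = b
  · exact h ▸ Reachable.refl a
  · refine Adj.reachable ((fromRel_adj _ a b).2 ⟨h, ?_⟩)
    rcases hab with hab | hab
    exacts [Or.inl ⟨e, hab⟩, Or.inr ⟨e, hab⟩]

lemma underlyingGraph_adj (hloop : ∀ e, pred e ≠ succ e) (e : E) :
    (underlyingGraph pred succ).Adj (pred e) (succ e) :=
  (fromRel_adj _ _ _).2 ⟨hloop e, Or.inl ⟨e, rfl, rfl⟩⟩

/-- Every dart of the underlying graph is an arc, possibly after reversal. -/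
lemma card_dart_underlyingGraph_le [Fintype V] [Fintype E] [DecidableEq V]
    [DecidableRel (underlyingGraph pred succ).Adj] {rev : E → E}
    (hprev : ∀ e, pred (rev e) = succ e) (hsrev : ∀ e, succ (rev e) = pred e)
    (hloop : ∀ e, pred e ≠ succ e) :
    Fintype.card (underlyingGraph pred succ).Dart ≤ Fintype.card E := by
  refine Fintype.card_le_of_surjective
    (fun e => ⟨(pred e, succ e), underlyingGraph_adj hloop e⟩)
    fun ⟨(a, b), hab⟩ => ?_
  rcases ((fromRel_adj _ a b).1 hab).2 with ⟨e, rfl, rfl⟩ | ⟨e, rfl, rfl⟩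
  · exact ⟨e, rfl⟩
  · exact ⟨rev e, by simp only [hprev, hsrev]⟩

lemma underlyingGraph_isTree [Fintype V] [Fintype E] [Nonempty V] {rev : E → E}
    (hprev : ∀ e, pred (rev e) = succ e) (hsrev : ∀ e, succ (rev e) = pred e)
    (hconn : ∀ u v : V, Relation.ReflTransGen
      (fun a b => ∃ e, (pred e = a ∧ succ e = b) ∨ (pred e = b ∧ succ e = a)) u v)
    (hloop : ∀ e, pred e ≠ succ e) (hcard : Fintype.card E = 2 * (Fintype.card V - 1)) :
    (underlyingGraph pred succ).IsTree := by
  classical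
  have hconn' := underlyingGraph_connected hconn
  have hlower := hconn'.card_vert_le_card_edgeSet_add_one
  have hupper := card_dart_underlyingGraph_le hprev hsrev hloop
  rw [dart_card_eq_twice_card_edges, edgeFinset_card, ← Nat.card_eq_fintype_card, hcard,
    ← Nat.card_eq_fintype_card] at hupper
  have hpos : 0 < Nat.card V := Nat.card_pos
  exact isTree_iff_connected_and_card.2 ⟨hconn', by omega⟩

lemma underlyingGraph_adj_pred_apply (hloop : ∀ e, pred e ≠ succ e) {φ : Equiv.Perm E}
    (hφ : ∀ e, succ e = pred (φ e)) (e : E) :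
    (underlyingGraph pred succ).Adj (pred e) (pred (φ e)) :=
  hφ e ▸ underlyingGraph_adj hloop e

end UnderlyingGraph

section IntersectionDistance

variable {V E : Type*}

structure IsGeneralizedIntersectionDistance (pred : E → V) (φ : Equiv.Perm E)
    (δ : ℤ → E → E → ℕ) : Prop where
  zero_self : ∀ e, δ 0 e e = 0
  one_apply : ∀ e, δ 1 e (φ e) = 0
  zero_le_one_of_pred_eq : ∀ e₁ e₂, pred e₁ = pred e₂ → δ 0 e₁ e₂ ≤ 1
  neg_symm : ∀ (x : ℤ) (e₁ e₂ : E), δ (-x) e₂ e₁ = δ x e₁ e₂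
  triangle : ∀ (x y : ℤ) (e₁ e₂ e₃ : E), δ (x + y) e₁ e₃ ≤ δ x e₁ e₂ + δ y e₂ e₃

namespace IsGeneralizedIntersectionDistance

variable {pred : E → V} {φ : Equiv.Perm E} {δ : ℤ → E → E → ℕ}

lemma pow_apply_eq_zero (hδ : IsGeneralizedIntersectionDistance pred φ δ) (k : ℕ) (e : E) :
    δ k e ((φ ^ k) e) = 0 := by
  induction k with
  | zero => exact hδ.zero_self e
  | succ k ih =>
    have hstep := hδ.triangle k 1 e ((φ ^ k) e) ((φ ^ (k + 1)) e)
    rw [ih, pow_succ', Equiv.Perm.mul_apply, hδ.one_apply] at hstep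
    rw [Nat.cast_succ, pow_succ', Equiv.Perm.mul_apply]
    omega

lemma le_one_of_pred_pow_add_eq (hδ : IsGeneralizedIntersectionDistance pred φ δ) {e : E} {a d : ℕ}
    (h : pred ((φ ^ (a + d)) e) = pred ((φ ^ a) e)) : δ d e e ≤ 1 := by
  set f := (φ ^ (a + d)) e
  calc δ d e e = δ ((a + d : ℕ) + (0 + -(a : ℤ))) e e := by push_cast; ring_nf
    _ ≤ δ (a + d : ℕ) e f + δ (0 + -(a : ℤ)) f e := hδ.triangle _ _ _ _ _
    _ ≤ δ (a + d : ℕ) e f + (δ 0 f ((φ ^ a) e) + δ (-(a : ℤ)) ((φ ^ a) e) e) :=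
        Nat.add_le_add_left (hδ.triangle _ _ _ _ _) _
    _ = δ 0 f ((φ ^ a) e) := by
        rw [hδ.pow_apply_eq_zero, hδ.neg_symm, hδ.pow_apply_eq_zero, zero_add, add_zero]
    _ ≤ 1 := hδ.zero_le_one_of_pred_eq _ _ h

end IsGeneralizedIntersectionDistance

end IntersectionDistance

/-- There is an absolute constant `C > 0` such that, for any
circulation `φ` on a finite connected symmetric directed multigraph which is a
tree (no loops and `m = 2(n − 1)`), any generalized intersection distance
measure `δ` for `φ`, any arc `e`, and any integer `B ≥ 1`, there is an integer
`x ∈ [B, 2B]` with `δ x e e ≤ C`. -/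
theorem stmt_13 : ∃ C : ℝ, 0 < C ∧
    ∀ (V E : Type) [Fintype V] [Fintype E] [Nonempty V]
      (pred succ : E → V) (rev : E → E),
      (∀ e, rev (rev e) = e) →
      (∀ e, pred (rev e) = succ e) →
      (∀ e, succ (rev e) = pred e) →
      (∀ e, pred e = succ e → rev e = e) →
      -- connectedness of the underlying undirected graph
      (∀ u v : V, Relation.ReflTransGen
        (fun a b => ∃ e, (pred e = a ∧ succ e = b) ∨ (pred e = b ∧ succ e = a)) u v) →
      -- G is a tree: no loops, and m = 2(n − 1)
      (∀ e : E, pred e ≠ succ e) →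
      Fintype.card E = 2 * (Fintype.card V - 1) →
      ∀ (φ : Equiv.Perm E), (∀ e, succ e = pred (φ e)) →
      -- δ is a generalized intersection distance measure
      ∀ δ : ℤ → E → E → ℕ,
      (∀ e, δ 0 e e = 0) →
      (∀ e, δ 1 e (φ e) = 0) →
      (∀ e₁ e₂, pred e₁ = pred e₂ → δ 0 e₁ e₂ ≤ 1) →
      (∀ (x : ℤ) (e₁ e₂ : E), δ (-x) e₂ e₁ = δ x e₁ e₂) →
      (∀ (x y : ℤ) (e₁ e₂ e₃ : E), δ (x + y) e₁ e₃ ≤ δ x e₁ e₂ + δ y e₂ e₃) →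
      ∀ (e : E) (B : ℕ), 1 ≤ B →
      ∃ x : ℤ, (B : ℤ) ≤ x ∧ x ≤ 2 * B ∧ (δ x e e : ℝ) ≤ C := by
  refine ⟨1, one_pos, ?_⟩
  intro V E _ _ _ pred succ rev _ hprev hsrev _ hconn hloop hcard φ hφ δ h0 h1 h01 hneg htri
    e B hB
  have hδ : IsGeneralizedIntersectionDistance pred φ δ := ⟨h0, h1, h01, hneg, htri⟩
  have hφp : φ ^ orderOf φ = 1 := pow_orderOf_eq_one φ
  rcases le_total (orderOf φ) B with hpB | hBp
  · obtain ⟨k, hk1, hk2⟩ := Nat.exists_mul_mem_Icc_of_le (orderOf_pos φ) hpB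
    have hzero := hδ.pow_apply_eq_zero (orderOf φ * k) e
    rw [pow_mul, hφp, one_pow, Equiv.Perm.one_apply] at hzero
    exact ⟨((orderOf φ * k : ℕ) : ℤ), by exact_mod_cast hk1, by exact_mod_cast hk2,
      by rw [hzero]; norm_num⟩
  · have hT := underlyingGraph_isTree hprev hsrev hconn hloop hcard
    obtain ⟨a, d, hd1, hd2, hv⟩ := hT.isAcyclic.exists_window_revisit hB (orderOf φ)
      (fun t => pred ((φ ^ t) e))
      (fun i _ => by
        simpa only [pow_succ', Equiv.Perm.mul_apply] using
          underlyingGraph_adj_pred_apply hloop hφ ((φ ^ i) e))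
      (by simp only [hφp, pow_zero]) hBp
    exact ⟨d, by exact_mod_cast hd1, by exact_mod_cast hd2,
      by exact_mod_cast hδ.le_one_of_pred_pow_add_eq hv⟩
end

section
/- There is an absolute constant C > 0 such that the following holds. Let G be a finite connected symmetric directed multigraph in which every vertex carries at least one loop (an arc e with pred e = succ e), let φ be a circulation on G, and let δ be a generalized intersection distance measure for φ. For an orbit E_i of φ, let diam(E_i) denote the maximum, over arcs e₁, e₂ ∈ E_i, of the distance in the underlying undirected graph of G between pred e₁ and pred e₂. Then for every arc e lying on orbit E_i and every j ∈ ℤ: δ j e e ≤ C·(diam(E_i) + 1). -/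
/-!
Translating along an orbit of `φ` costs nothing (`δ (x + 1) e₁ (φ e₂) = δ x e₁ e₂`), so
`δ j e e = δ 0 e a` with `a = φ^(-j) e` on the same orbit. Following an arc `a` costs at most one
unit: `δ 1 x (φ a) ≤ 1` whenever `pred x = pred a`, and `pred (φ a) = succ a`. With loops at every
vertex, walks of length at most `n` can be padded to length exactly `n`, so `δ n x y ≤ n + 1`
whenever `dist (pred x) (pred y) ≤ n`. Taking `n = dist (pred e) (pred a) ≤ D`, the triangle
inequality `δ 0 e a ≤ δ n e a + δ (-n) a a` gives `δ j e e ≤ 2 (D + 1)`.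
-/

open SimpleGraph

structure IsIntersectionDistance {V E : Type*} (pred : E → V) (φ : Equiv.Perm E)
    (δ : ℤ → E → E → ℕ) : Prop where
  apply_one_self : ∀ e, δ 1 e (φ e) = 0
  apply_zero_le_one : ∀ e₁ e₂, pred e₁ = pred e₂ → δ 0 e₁ e₂ ≤ 1
  apply_neg : ∀ x e₁ e₂, δ (-x) e₂ e₁ = δ x e₁ e₂
  triangle : ∀ x y e₁ e₂ e₃, δ (x + y) e₁ e₃ ≤ δ x e₁ e₂ + δ y e₂ e₃

namespace IsIntersectionDistance

variable {V E : Type*} {pred succ : E → V} {φ : Equiv.Perm E} {δ : ℤ → E → E → ℕ}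

theorem apply_add_one (hδ : IsIntersectionDistance pred φ δ) (x : ℤ) (e₁ e₂ : E) :
    δ (x + 1) e₁ (φ e₂) = δ x e₁ e₂ := by
  apply le_antisymm
  · simpa [hδ.apply_one_self] using hδ.triangle x 1 e₁ e₂ (φ e₂)
  · have hback : δ (-1) (φ e₂) e₂ = 0 := by rw [hδ.apply_neg, hδ.apply_one_self]
    simpa [hback] using hδ.triangle (x + 1) (-1) e₁ (φ e₂) e₂

theorem apply_zpow (hδ : IsIntersectionDistance pred φ δ) (n : ℤ) (e₁ e₂ : E) :
    δ n e₁ ((φ ^ n) e₂) = δ 0 e₁ e₂ := by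
  induction n using Int.induction_on generalizing e₂ with
  | zero => simp
  | succ k ih => rw [add_comm, zpow_one_add, Equiv.Perm.mul_apply, add_comm, hδ.apply_add_one, ih]
  | pred k ih =>
    rw [← hδ.apply_add_one, ← Equiv.Perm.mul_apply, ← zpow_one_add, sub_add_cancel,
      add_sub_cancel, ih]

theorem apply_self_eq (hδ : IsIntersectionDistance pred φ δ) (j : ℤ) (e : E) :
    δ j e e = δ 0 e ((φ ^ (-j)) e) := by
  rw [← hδ.apply_zpow j, ← Equiv.Perm.mul_apply, ← zpow_add, add_neg_cancel, zpow_zero,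
    Equiv.Perm.one_apply]

theorem apply_one_le_one (hδ : IsIntersectionDistance pred φ δ) {x a : E}
    (hxa : pred x = pred a) : δ 1 x (φ a) ≤ 1 :=
  calc δ 1 x (φ a) = δ (0 + 1) x (φ a) := by rw [zero_add]
    _ ≤ δ 0 x a + δ 1 a (φ a) := hδ.triangle 0 1 x a (φ a)
    _ ≤ 1 := by rw [hδ.apply_one_self, add_zero]; exact hδ.apply_zero_le_one x a hxa

theorem apply_succ_le (hδ : IsIntersectionDistance pred φ δ) {n k : ℕ} {x y a : E}
    (hxa : pred x = pred a) (h : δ n (φ a) y ≤ k) : δ (n + 1 : ℕ) x y ≤ k + 1 :=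
  calc δ (n + 1 : ℕ) x y = δ (1 + n) x y := by push_cast; rw [add_comm]
    _ ≤ δ 1 x (φ a) + δ n (φ a) y := hδ.triangle 1 n x (φ a) y
    _ ≤ k + 1 := by have := hδ.apply_one_le_one hxa; omega

theorem apply_le_of_pred_eq (hδ : IsIntersectionDistance pred φ δ)
    (hφ : ∀ e, succ e = pred (φ e)) (hloop : ∀ v, ∃ a, pred a = v ∧ succ a = v) (n : ℕ)
    {x y : E} (hxy : pred x = pred y) : δ n x y ≤ n + 1 := by
  induction n generalizing x with
  | zero => simpa using hδ.apply_zero_le_one x y hxy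
  | succ n ih =>
    obtain ⟨ℓ, hℓ, hℓ'⟩ := hloop (pred x)
    exact hδ.apply_succ_le hℓ.symm (ih (by rw [← hφ, hℓ', hxy]))

theorem apply_le_of_walk (hδ : IsIntersectionDistance pred φ δ)
    (hφ : ∀ e, succ e = pred (φ e)) (hloop : ∀ v, ∃ a, pred a = v ∧ succ a = v)
    {G : SimpleGraph V} (harc : ∀ u v, G.Adj u v → ∃ a, pred a = u ∧ succ a = v)
    {u v : V} (p : G.Walk u v) {n : ℕ} (hn : p.length ≤ n) {x y : E}
    (hx : pred x = u) (hy : pred y = v) : δ n x y ≤ n + 1 := by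
  induction p generalizing n x with
  | nil => exact hδ.apply_le_of_pred_eq hφ hloop n (hx.trans hy.symm)
  | cons hadj p ih =>
    obtain ⟨m, rfl⟩ : ∃ m, n = m + 1 := Nat.exists_eq_add_one.mpr (by simp at hn; omega)
    obtain ⟨a, ha, ha'⟩ := harc _ _ hadj
    exact hδ.apply_succ_le (hx.trans ha.symm)
      (ih (by simpa using hn) (by rw [← hφ, ha']) hy)

theorem apply_zero_le_dist (hδ : IsIntersectionDistance pred φ δ)
    (hφ : ∀ e, succ e = pred (φ e)) (hloop : ∀ v, ∃ a, pred a = v ∧ succ a = v)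
    {G : SimpleGraph V} (harc : ∀ u v, G.Adj u v → ∃ a, pred a = u ∧ succ a = v)
    {x y : E} (hxy : G.Reachable (pred x) (pred y)) :
    δ 0 x y ≤ 2 * (G.dist (pred x) (pred y) + 1) := by
  obtain ⟨p, hp⟩ := hxy.exists_walk_length_eq_dist
  set n := G.dist (pred x) (pred y)
  calc δ 0 x y = δ (n + -n) x y := by rw [add_neg_cancel]
    _ ≤ δ n x y + δ (-n) y y := hδ.triangle _ _ x y y
    _ = δ n x y + δ n y y := by rw [hδ.apply_neg]
    _ ≤ (n + 1) + (n + 1) := Nat.add_le_add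
        (hδ.apply_le_of_walk hφ hloop harc p hp.le rfl rfl)
        (hδ.apply_le_of_pred_eq hφ hloop n rfl)
    _ = 2 * (n + 1) := by ring

end IsIntersectionDistance

theorem SimpleGraph.reachable_fromRel_of_reflTransGen {V : Type*} {r s : V → V → Prop}
    (hsr : ∀ a b, s a b → r a b ∨ r b a) {u v : V} (h : Relation.ReflTransGen s u v) :
    (fromRel r).Reachable u v := by
  rw [reachable_iff_reflTransGen, ← Relation.reflTransGen_reflGen]
  refine Relation.ReflTransGen.mono (fun a b hab => ?_) u v h
  by_cases hne : a = b
  · exact hne ▸ Relation.ReflGen.refl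
  · exact Relation.ReflGen.single ((fromRel_adj r a b).mpr ⟨hne, hsr a b hab⟩)

/-- There is an absolute constant `C > 0` such that, for any
circulation `φ` on a finite connected symmetric directed multigraph in which
every vertex carries a loop, and any generalized intersection distance measure
`δ` for `φ`: for every arc `e` on orbit `E_i` and every `j ∈ ℤ`,
`δ j e e ≤ C·(diam(E_i) + 1)`, where `diam(E_i)` is the maximal undirected-graph
distance between start vertices of arcs of `E_i`.  (Formulated below via any
upper bound `D` on those distances; in particular `D = diam(E_i)` works.) -/
theorem stmt_14 : ∃ C : ℝ, 0 < C ∧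
    ∀ (V E : Type) [Fintype V] [Fintype E] [Nonempty V]
      (pred succ : E → V) (rev : E → E),
      (∀ e, rev (rev e) = e) →
      (∀ e, pred (rev e) = succ e) →
      (∀ e, succ (rev e) = pred e) →
      (∀ e, pred e = succ e → rev e = e) →
      -- connectedness of the underlying undirected graph
      (∀ u v : V, Relation.ReflTransGen
        (fun a b => ∃ e, (pred e = a ∧ succ e = b) ∨ (pred e = b ∧ succ e = a)) u v) →
      -- every vertex carries at least one loop
      (∀ v : V, ∃ e : E, pred e = v ∧ succ e = v) →
      ∀ (φ : Equiv.Perm E), (∀ e, succ e = pred (φ e)) →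
      -- δ is a generalized intersection distance measure
      ∀ δ : ℤ → E → E → ℕ,
      (∀ e, δ 0 e e = 0) →
      (∀ e, δ 1 e (φ e) = 0) →
      (∀ e₁ e₂, pred e₁ = pred e₂ → δ 0 e₁ e₂ ≤ 1) →
      (∀ (x : ℤ) (e₁ e₂ : E), δ (-x) e₂ e₁ = δ x e₁ e₂) →
      (∀ (x y : ℤ) (e₁ e₂ e₃ : E), δ (x + y) e₁ e₃ ≤ δ x e₁ e₂ + δ y e₂ e₃) →
      ∀ (e : E) (D : ℕ),
        -- D bounds the diameter of the orbit of e in the underlying undirected graph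
        (∀ e₁ e₂ : E, (∃ z : ℤ, (φ ^ z) e = e₁) → (∃ z : ℤ, (φ ^ z) e = e₂) →
          (SimpleGraph.fromRel fun u v : V => ∃ a : E, pred a = u ∧ succ a = v).dist
            (pred e₁) (pred e₂) ≤ D) →
        ∀ j : ℤ, (δ j e e : ℝ) ≤ C * (D + 1) := by
  refine ⟨2, two_pos, ?_⟩
  intro V E _ _ _ pred succ rev _ hpr hsr _ hconn hloop φ hφ δ _ h1 hsame hsym htri e D hD j
  have hδ : IsIntersectionDistance pred φ δ := ⟨h1, hsame, hsym, htri⟩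
  set G := fromRel fun u v : V => ∃ a : E, pred a = u ∧ succ a = v
  have harc : ∀ u v, G.Adj u v → ∃ a, pred a = u ∧ succ a = v := by
    rintro u v ⟨-, h | ⟨a, rfl, rfl⟩⟩
    · exact h
    · exact ⟨rev a, hpr a, hsr a⟩
  have hreach : ∀ u v, G.Reachable u v := fun u v =>
    reachable_fromRel_of_reflTransGen
      (fun _ _ ⟨a, h⟩ => h.imp (fun h => ⟨a, h⟩) (fun h => ⟨a, h⟩)) (hconn u v)
  set a := (φ ^ (-j)) e
  have hdist : G.dist (pred e) (pred a) ≤ D := hD e a ⟨0, rfl⟩ ⟨-j, rfl⟩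
  have hbound := hδ.apply_zero_le_dist hφ hloop harc (hreach (pred e) (pred a))
  rw [hδ.apply_self_eq j e]
  exact_mod_cast hbound.trans (by omega)
end

section
/- Let G be a finite symmetric directed multigraph, let φ be an Eulerian circulation on G, and let L be a φ-compatible, cumulatively balanced load sequence. Suppose arcs f₁, f₂ satisfy pred f₁ = pred f₂ and f₂ = φ^x f₁ for some x ∈ ℕ. Then for every arc e, every τ ∈ ℤ and every T ∈ ℕ: |Σ_{i=0}^{T−1} L (τ+i) e − Σ_{i=0}^{T−1} L (τ+x+i) e| ≤ 1. -/
/-- For an Eulerian circulation `φ` on a finite symmetric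
directed multigraph and a `φ`-compatible, cumulatively balanced load sequence
`L`, if arcs `f₁, f₂` satisfy `pred f₁ = pred f₂` and `f₂ = φ^x f₁` for some
`x ∈ ℕ`, then for every arc `e`, `τ ∈ ℤ` and `T ∈ ℕ`, the cumulated loads on `e`
over the windows `[τ, τ+T)` and `[τ+x, τ+x+T)` differ by at most `1`. -/
theorem stmt_15 {V E : Type} [Fintype V] [Fintype E] [Nonempty V]
    (pred succ : E → V) (rev : E → E)
    (hrev : ∀ e, rev (rev e) = e)
    (hpredrev : ∀ e, pred (rev e) = succ e)
    (hsuccrev : ∀ e, succ (rev e) = pred e)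
    (hrevloop : ∀ e, pred e = succ e → rev e = e)
    (φ : Equiv.Perm E) (hφ : ∀ e, succ e = pred (φ e))
    -- Eulerian
    (heuler : ∀ e₁ e₂ : E, ∃ t : ℕ, (φ ^ t) e₁ = e₂)
    (L : ℤ → E → ℕ)
    -- φ-compatible
    (hcompat : ∀ (t : ℤ) (e : E), L t e = L (t + 1) (φ e))
    -- cumulatively balanced
    (hbal : ∀ e₁ e₂ : E, pred e₁ = pred e₂ → ∀ (τ : ℤ) (T : ℕ),
      |(∑ i ∈ Finset.range T, (L (τ + i) e₁ : ℤ)) -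
        ∑ i ∈ Finset.range T, (L (τ + i) e₂ : ℤ)| ≤ 1)
    (f₁ f₂ : E) (hpred : pred f₁ = pred f₂) (x : ℕ) (hx : f₂ = (φ ^ x) f₁) :
    ∀ (e : E) (τ : ℤ) (T : ℕ),
      |(∑ i ∈ Finset.range T, (L (τ + i) e : ℤ)) -
        ∑ i ∈ Finset.range T, (L (τ + x + i) e : ℤ)| ≤ 1 := by
  -- iterated compatibility
  have hiter : ∀ (k : ℕ) (s : ℤ) (f : E), L s f = L (s + k) ((φ ^ k) f) := by
    intro k
    induction k with
    | zero => intro s f; simp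
    | succ k ih =>
      intro s f
      have h1 : (φ ^ (k + 1)) f = φ ((φ ^ k) f) := by
        rw [pow_succ', Equiv.Perm.mul_apply]
      rw [h1]
      have := hcompat (s + k) ((φ ^ k) f)
      rw [← ih s f] at this
      rw [this]
      congr 1
      push_cast
      ring
  intro e τ T
  obtain ⟨t, ht⟩ := heuler e f₁
  have key1 : ∀ i : ℕ, L (τ + i) e = L (τ + (t + x) + i) f₂ := by
    intro i
    have h1 : L (τ + i) e = L (τ + i + t) f₁ := by
      have := hiter t (τ + i) e
      rw [ht] at this; exact this
    have h2 : L (τ + i + t) f₁ = L (τ + i + t + x) f₂ := by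
      have := hiter x (τ + i + t) f₁
      rw [← hx] at this; exact this
    rw [h1, h2]; ring_nf
  have key2 : ∀ i : ℕ, L (τ + x + i) e = L (τ + (t + x) + i) f₁ := by
    intro i
    have h1 : L (τ + x + i) e = L (τ + x + i + t) f₁ := by
      have := hiter t (τ + x + i) e
      rw [ht] at this; exact this
    rw [h1]; ring_nf
  calc |(∑ i ∈ Finset.range T, (L (τ + i) e : ℤ)) -
        ∑ i ∈ Finset.range T, (L (τ + x + i) e : ℤ)|
      = |(∑ i ∈ Finset.range T, (L (τ + (t + x) + i) f₂ : ℤ)) -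
        ∑ i ∈ Finset.range T, (L (τ + (t + x) + i) f₁ : ℤ)| := by
        congr 1
        · congr 1
          · exact Finset.sum_congr rfl fun i _ => by rw [key1 i]
          · exact Finset.sum_congr rfl fun i _ => by rw [key2 i]
    _ ≤ 1 := hbal f₂ f₁ hpred.symm (τ + (t + x)) T
end
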